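/- arXiv:1502.06779 — 12 statements merged into one kernel-verified Lean document; each statement's English description precedes it below -/
import Mathlib

section
/- On an almost Norden manifold, the (0,3)-potential Φ(x,y,z) = g(∇̃_x y - ∇_x y, z) is expressed through the fundamental tensor F by Φ(x,y,z) = ½{F(Jz,x,y) - F(x,y,Jz) - F(y,x,Jz)}, and conversely F(x,y,z) = Φ(x,y,Jz) + Φ(x,z,Jy). -/
/-- The (0,3)-potential Φ(x,y,z) = g(∇̃ₓy - ∇ₓy, z) satisfies
Φ(x,y,z) = ½{F(Jz,x,y) - F(x,y,Jz) - F(y,x,Jz)} and conversely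
F(x,y,z) = Φ(x,y,Jz) + Φ(x,z,Jy). -/
theorem potential_via_fundamental_tensor
    (R : Type*) [CommRing R] [Algebra ℝ R]
    (V : Type*) [AddCommGroup V] [Module R V] [Module ℝ V] [IsScalarTower ℝ R V]
    [LieRing V]
    (Dop : V → R → R) (g : V → V → R) (J : V → V) (nab : V → V → V)
    (hg_symm : ∀ x y, g x y = g y x)
    (hg_addl : ∀ x x' y, g (x + x') y = g x y + g x' y)
    (hg_smull : ∀ (f : R) x y, g (f • x) y = f * g x y)
    (hg_nd : ∀ x, (∀ y, g x y = 0) → x = 0)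
    (hJ_add : ∀ x y, J (x + y) = J x + J y)
    (hJ_smul : ∀ (f : R) x, J (f • x) = f • J x)
    (hJJ : ∀ x, J (J x) = -x)
    (hNorden : ∀ x y, g (J x) (J y) = -(g x y))
    (hD_add : ∀ x a b, Dop x (a + b) = Dop x a + Dop x b)
    (hD_mul : ∀ x a b, Dop x (a * b) = Dop x a * b + a * Dop x b)
    (hnab_addl : ∀ x x' y, nab (x + x') y = nab x y + nab x' y)
    (hnab_smull : ∀ (f : R) x y, nab (f • x) y = f • nab x y)
    (hnab_addr : ∀ x y y', nab x (y + y') = nab x y + nab x y')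
    (hnab_leib : ∀ (f : R) x y, nab x (f • y) = Dop x f • y + f • nab x y)
    (hTF : ∀ x y, nab x y - nab y x = ⁅x, y⁆)
    (hMC : ∀ x y z, Dop x (g y z) = g (nab x y) z + g y (nab x z))
    (nab' : V → V → V)
    (hnab'_addl : ∀ x x' y, nab' (x + x') y = nab' x y + nab' x' y)
    (hnab'_smull : ∀ (f : R) x y, nab' (f • x) y = f • nab' x y)
    (hnab'_addr : ∀ x y y', nab' x (y + y') = nab' x y + nab' x y')
    (hnab'_leib : ∀ (f : R) x y, nab' x (f • y) = Dop x f • y + f • nab' x y)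
    (hTF' : ∀ x y, nab' x y - nab' y x = ⁅x, y⁆)
    (hMC' : ∀ x y z, Dop x (g y (J z)) = g (nab' x y) (J z) + g y (J (nab' x z)))
    (F : V → V → V → R)
    (hF : ∀ x y z, F x y z = g (nab x (J y) - J (nab x y)) z)
    (Phi03 : V → V → V → R)
    (hPhi03 : ∀ x y z, Phi03 x y z = g (nab' x y - nab x y) z) :
    (∀ x y z, Phi03 x y z =
      ((1:ℝ)/2) • (F (J z) x y - F x y (J z) - F y x (J z))) ∧
    (∀ x y z, F x y z = Phi03 x y (J z) + Phi03 x z (J y)) := by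

  -- basic linearity facts for g
  have gnegl : ∀ a b, g (-a) b = -(g a b) := by
    intro a b
    rw [← neg_one_smul R a, hg_smull]; ring
  have gsub : ∀ a b c, g (a - b) c = g a c - g b c := by
    intro a b c
    rw [sub_eq_add_neg, hg_addl, gnegl]; ring
  have gnegr : ∀ a b, g a (-b) = -(g a b) := by
    intro a b
    rw [hg_symm, gnegl, hg_symm]
  -- J is g-symmetric
  have Jswap : ∀ a b, g (J a) b = g a (J b) := by
    intro a b
    have h := hNorden a (J b)
    rw [hJJ, gnegr] at h
    exact neg_injective h
  -- symmetry of the difference tensor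
  have Qsymm : ∀ x y, nab' x y - nab x y = nab' y x - nab y x := by
    intro x y
    rw [sub_eq_sub_iff_sub_eq_sub, hTF', hTF]
  have PhiSymm : ∀ x y z, Phi03 x y z = Phi03 y x z := by
    intro x y z
    rw [hPhi03, hPhi03, Qsymm]
  have PhiJJ : ∀ x y z, Phi03 x y (J (J z)) = -Phi03 x y z := by
    intro x y z
    rw [hJJ, hPhi03, hPhi03, gnegr]
  -- the key identity F(x,y,z) = Φ(x,y,Jz) + Φ(x,z,Jy)
  have key : ∀ x y z, F x y z = Phi03 x y (J z) + Phi03 x z (J y) := by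
    intro x y z
    have A' : Dop x (g z (J y)) = g (nab' x z) (J y) + g (nab' x y) (J z) := by
      rw [hMC' x z y, hg_symm z (J (nab' x y)), Jswap]
    have B' : Dop x (g z (J y)) = g (nab x z) (J y) + g (nab x (J y)) z := by
      rw [hMC x z (J y), hg_symm z (nab x (J y))]
    rw [hF, hPhi03, hPhi03, gsub, gsub, gsub, Jswap (nab x y) z]
    linear_combination A' - B'
  refine ⟨?_, key⟩
  intro x y z
  have sum : F (J z) x y - F x y (J z) - F y x (J z) = Phi03 x y z + Phi03 x y z := by
    rw [key, key, key, PhiJJ, PhiJJ, PhiSymm (J z) x, PhiSymm (J z) y, PhiSymm y x]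
    ring
  rw [sum, ← two_smul ℝ (Phi03 x y z), smul_smul]
  norm_num
end

section
/- On an almost Norden manifold, the associated 1-forms f(z) = g^{ij}Φ(e_i,e_j,z) and f*(z) = g^{ij}Φ(e_i,Je_j,z) of the potential Φ are related to the Lee forms of F by f = θ* and f* = -θ. -/
private lemma aux_expand {R V : Type*} [CommRing R] [AddCommGroup V] [Module R V] {m : ℕ}
    (e : Fin m → V) (c : Fin m → R) (L : V → R)
    (hadd : ∀ a b, L (a + b) = L a + L b) (hsmul : ∀ (r : R) (v : V), L (r • v) = r * L v) :
    L (∑ k, c k • e k) = ∑ k, c k * L (e k) := by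
  have h := map_sum (AddMonoidHom.mk' L hadd) (fun k => c k • e k) Finset.univ
  simp only [AddMonoidHom.mk'_apply] at h
  rw [h]
  exact Finset.sum_congr rfl fun k _ => hsmul _ _

private lemma aux_reindex {R : Type*} [AddCommMonoid R] {m : ℕ}
    (K1 K2 : Fin m → Fin m → Fin m → Fin m → R)
    (h : ∀ i j k l, K1 i j k l = K2 l k i j) :
    (∑ i, ∑ j, ∑ k, ∑ l, K1 i j k l) = ∑ i, ∑ j, ∑ k, ∑ l, K2 i j k l := by
  have pack : ∀ (K : Fin m → Fin m → Fin m → Fin m → R),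
      (∑ p : Fin m × Fin m × Fin m × Fin m, K p.1 p.2.1 p.2.2.1 p.2.2.2)
        = ∑ i, ∑ j, ∑ k, ∑ l, K i j k l := by
    intro K
    rw [Fintype.sum_prod_type]
    refine Finset.sum_congr rfl fun i _ => ?_
    rw [Fintype.sum_prod_type]
    refine Finset.sum_congr rfl fun j _ => ?_
    rw [Fintype.sum_prod_type]
  rw [← pack K1, ← pack K2]
  exact Fintype.sum_equiv
    ⟨fun p => (p.2.2.2, p.2.2.1, p.1, p.2.1), fun p => (p.2.2.1, p.2.2.2, p.2.1, p.1),
      fun p => rfl, fun p => rfl⟩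
    _ _ (fun p => h p.1 p.2.1 p.2.2.1 p.2.2.2)

private lemma aux_swap {R V : Type*} [CommRing R] [AddCommGroup V] [Module R V] {m : ℕ}
    (e : Fin m → V) (g : V → V → R) (J : V → V) (ginv : Fin m → Fin m → R)
    (hsym : ∀ i j, ginv i j = ginv j i)
    (hgJ : ∀ i j, g (e i) (J (e j)) = g (e j) (J (e i)))
    (hJe : ∀ j, J (e j) = ∑ k, (∑ l, ginv k l * g (e l) (J (e j))) • e k)
    (B : V → V → R)
    (hBl_add : ∀ a b v, B (a + b) v = B a v + B b v)
    (hBl_smul : ∀ (r : R) a v, B (r • a) v = r * B a v)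
    (hBr_add : ∀ u a b, B u (a + b) = B u a + B u b)
    (hBr_smul : ∀ u (r : R) a, B u (r • a) = r * B u a) :
    (∑ i, ∑ j, ginv i j * B (e i) (J (e j))) = ∑ i, ∑ j, ginv i j * B (J (e i)) (e j) := by
  have hL : ∀ i j, ginv i j * B (e i) (J (e j))
      = ∑ k, ∑ l, ginv i j * ginv k l * g (e l) (J (e j)) * B (e i) (e k) := by
    intro i j
    have hx : B (e i) (J (e j))
        = ∑ k, (∑ l, ginv k l * g (e l) (J (e j))) * B (e i) (e k) := by
      conv_lhs => rw [hJe j]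
      exact aux_expand e _ (B (e i)) (hBr_add (e i)) (fun r v => hBr_smul (e i) r v)
    rw [hx, Finset.mul_sum]
    refine Finset.sum_congr rfl fun k _ => ?_
    rw [Finset.sum_mul, Finset.mul_sum]
    exact Finset.sum_congr rfl fun l _ => by ring
  have hR : ∀ i j, ginv i j * B (J (e i)) (e j)
      = ∑ k, ∑ l, ginv i j * ginv k l * g (e l) (J (e i)) * B (e k) (e j) := by
    intro i j
    have hx : B (J (e i)) (e j)
        = ∑ k, (∑ l, ginv k l * g (e l) (J (e i))) * B (e k) (e j) := by
      conv_lhs => rw [hJe i]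
      exact aux_expand e _ (fun u => B u (e j)) (fun a b => hBl_add a b (e j))
        (fun r v => hBl_smul r v (e j))
    rw [hx, Finset.mul_sum]
    refine Finset.sum_congr rfl fun k _ => ?_
    rw [Finset.sum_mul, Finset.mul_sum]
    exact Finset.sum_congr rfl fun l _ => by ring
  calc (∑ i, ∑ j, ginv i j * B (e i) (J (e j)))
      = ∑ i, ∑ j, ∑ k, ∑ l, ginv i j * ginv k l * g (e l) (J (e j)) * B (e i) (e k) :=
        Finset.sum_congr rfl fun i _ => Finset.sum_congr rfl fun j _ => hL i j
    _ = ∑ i, ∑ j, ∑ k, ∑ l, ginv i j * ginv k l * g (e l) (J (e i)) * B (e k) (e j) := by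
        apply aux_reindex
        intro i j k l
        rw [hsym l k, hgJ j l]
        ring
    _ = ∑ i, ∑ j, ginv i j * B (J (e i)) (e j) :=
        (Finset.sum_congr rfl fun i _ => Finset.sum_congr rfl fun j _ => hR i j).symm

/-- The associated 1-forms f(z) = gⁱʲΦ(eᵢ,eⱼ,z), f*(z) = gⁱʲΦ(eᵢ,Jeⱼ,z) of the potential
are related to the Lee forms of F by f = θ* and f* = -θ. -/
theorem potential_one_forms_vs_lee_forms
    (R : Type*) [CommRing R] [Algebra ℝ R]
    (V : Type*) [AddCommGroup V] [Module R V] [Module ℝ V] [IsScalarTower ℝ R V]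
    [LieRing V]
    (Dop : V → R → R) (g : V → V → R) (J : V → V) (nab : V → V → V)
    (hg_symm : ∀ x y, g x y = g y x)
    (hg_addl : ∀ x x' y, g (x + x') y = g x y + g x' y)
    (hg_smull : ∀ (f : R) x y, g (f • x) y = f * g x y)
    (hg_nd : ∀ x, (∀ y, g x y = 0) → x = 0)
    (hJ_add : ∀ x y, J (x + y) = J x + J y)
    (hJ_smul : ∀ (f : R) x, J (f • x) = f • J x)
    (hJJ : ∀ x, J (J x) = -x)
    (hNorden : ∀ x y, g (J x) (J y) = -(g x y))
    (hD_add : ∀ x a b, Dop x (a + b) = Dop x a + Dop x b)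
    (hD_mul : ∀ x a b, Dop x (a * b) = Dop x a * b + a * Dop x b)
    (hnab_addl : ∀ x x' y, nab (x + x') y = nab x y + nab x' y)
    (hnab_smull : ∀ (f : R) x y, nab (f • x) y = f • nab x y)
    (hnab_addr : ∀ x y y', nab x (y + y') = nab x y + nab x y')
    (hnab_leib : ∀ (f : R) x y, nab x (f • y) = Dop x f • y + f • nab x y)
    (hTF : ∀ x y, nab x y - nab y x = ⁅x, y⁆)
    (hMC : ∀ x y z, Dop x (g y z) = g (nab x y) z + g y (nab x z))
    (nab' : V → V → V)
    (hnab'_addl : ∀ x x' y, nab' (x + x') y = nab' x y + nab' x' y)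
    (hnab'_smull : ∀ (f : R) x y, nab' (f • x) y = f • nab' x y)
    (hnab'_addr : ∀ x y y', nab' x (y + y') = nab' x y + nab' x y')
    (hnab'_leib : ∀ (f : R) x y, nab' x (f • y) = Dop x f • y + f • nab' x y)
    (hTF' : ∀ x y, nab' x y - nab' y x = ⁅x, y⁆)
    (hMC' : ∀ x y z, Dop x (g y (J z)) = g (nab' x y) (J z) + g y (J (nab' x z)))
    (F : V → V → V → R)
    (hF : ∀ x y z, F x y z = g (nab x (J y) - J (nab x y)) z)
    (m : ℕ) (e : Module.Basis (Fin m) R V) (ginv : Fin m → Fin m → R)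
    (hginv : ∀ i j, (∑ k, ginv i k * g (e k) (e j)) = if i = j then (1:R) else 0)
    (hginv2 : ∀ i j, (∑ k, g (e i) (e k) * ginv k j) = if i = j then (1:R) else 0)
    (Phi03 : V → V → V → R)
    (hPhi03 : ∀ x y z, Phi03 x y z = g (nab' x y - nab x y) z)
    (theta thetas : V → R)
    (htheta : ∀ z, theta z = ∑ i, ∑ j, ginv i j * F (e i) (e j) z)
    (hthetas : ∀ z, thetas z = ∑ i, ∑ j, ginv i j * F (e i) (J (e j)) z)
    (f fs : V → R)
    (hf : ∀ z, f z = ∑ i, ∑ j, ginv i j * Phi03 (e i) (e j) z)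
    (hfs : ∀ z, fs z = ∑ i, ∑ j, ginv i j * Phi03 (e i) (J (e j)) z) :
    (∀ z, f z = thetas z) ∧ (∀ z, fs z = -(theta z)) := by
  classical
  -- cancellation of 2 in R (R is an ℝ-algebra)
  have htwo : ∀ a b : R, a + a = b + b → a = b := by
    intro a b h
    have h1 : (2:ℝ) • a = (2:ℝ) • b := by rw [two_smul, two_smul]; exact h
    have h2 : ((1/2:ℝ) * 2) • a = ((1/2:ℝ) * 2) • b := by rw [mul_smul, mul_smul, h1]
    norm_num at h2
    exact h2
  -- derived facts about g
  have hgnegl : ∀ x y : V, g (-x) y = -(g x y) := by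
    intro x y
    have h := hg_smull (-1) x y
    simpa [neg_one_smul] using h
  have hgsubl : ∀ x x' y : V, g (x - x') y = g x y - g x' y := by
    intro x x' y
    rw [sub_eq_add_neg, hg_addl, hgnegl, ← sub_eq_add_neg]
  have hgaddr : ∀ x y y' : V, g x (y + y') = g x y + g x y' := by
    intro x y y'
    rw [hg_symm, hg_addl, hg_symm y x, hg_symm y' x]
  have hgsmulr : ∀ (r : R) (x y : V), g x (r • y) = r * g x y := by
    intro r x y; rw [hg_symm, hg_smull, hg_symm]
  have hgnegr : ∀ x y : V, g x (-y) = -(g x y) := by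
    intro x y; rw [hg_symm, hgnegl, hg_symm]
  -- derived facts about J
  have hJneg : ∀ x : V, J (-x) = -(J x) := by
    intro x; have h := hJ_smul (-1) x; simpa [neg_one_smul] using h
  have hJsub : ∀ x y : V, J (x - y) = J x - J y := by
    intro x y; rw [sub_eq_add_neg, hJ_add, hJneg, ← sub_eq_add_neg]
  -- derived facts about Dop
  have hD0 : ∀ x : V, Dop x 0 = 0 := by
    intro x
    have h := hD_add x 0 0
    simp only [add_zero] at h
    exact left_eq_add.mp h
  have hD1 : ∀ x : V, Dop x 1 = 0 := by
    intro x
    have h := hD_mul x 1 1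
    simp only [mul_one, one_mul] at h
    exact left_eq_add.mp h
  have hDneg1 : ∀ x : V, Dop x (-1) = 0 := by
    intro x
    have h := hD_add x (-1) 1
    rw [neg_add_cancel, hD0, hD1, add_zero] at h
    exact h.symm
  -- nab of a negative
  have hnabneg : ∀ x y : V, nab x (-y) = -(nab x y) := by
    intro x y
    have h := hnab_leib (-1) x y
    rw [hDneg1, zero_smul, zero_add, neg_one_smul, neg_one_smul] at h
    exact h
  -- the twin metric g~ is symmetric
  have hgt : ∀ u v : V, g (J u) v = g u (J v) := by
    intro u v
    have h := hNorden u (J v)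
    rw [hJJ v, hgnegr] at h
    exact neg_injective h
  -- Phi is antilinear in last argument w.r.t. negation, and symmetric in first two
  have hPhineg : ∀ a b c : V, Phi03 a b (-c) = -(Phi03 a b c) := by
    intro a b c; rw [hPhi03, hPhi03, hgnegr]
  have hPhiSym : ∀ x y z : V, Phi03 x y z = Phi03 y x z := by
    intro x y z
    rw [hPhi03, hPhi03]
    have hv : nab' x y - nab x y = nab' y x - nab y x := by
      have h3 : nab' x y - nab x y - (nab' y x - nab y x)
          = (nab' x y - nab' y x) - (nab x y - nab y x) := by abel
      rw [hTF' x y, hTF x y, sub_self] at h3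
      exact sub_eq_zero.mp h3
    rw [hv]
  -- the fundamental identity F(x,z,y) = Phi(x,y,Jz) + Phi(x,z,Jy)
  have hstar : ∀ x y z : V, F x z y = Phi03 x y (J z) + Phi03 x z (J y) := by
    intro x y z
    have h3 : g (nab' x y) (J z) + g y (J (nab' x z))
        = g (nab x y) (J z) + g y (nab x (J z)) := by
      rw [← hMC' x y z, hMC x y (J z)]
    have e1 : Phi03 x y (J z) = g (nab' x y) (J z) - g (nab x y) (J z) := by
      rw [hPhi03, hgsubl]
    have e2a : g (nab' x z) (J y) = g y (J (nab' x z)) := by rw [← hgt, hg_symm]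
    have e2b : g (nab x z) (J y) = g y (J (nab x z)) := by rw [← hgt, hg_symm]
    have e2 : Phi03 x z (J y) = g y (J (nab' x z)) - g y (J (nab x z)) := by
      rw [hPhi03, hgsubl, e2a, e2b]
    have e3 : F x z y = g y (nab x (J z)) - g y (J (nab x z)) := by
      rw [hF, hgsubl, hg_symm (nab x (J z)) y, hg_symm (J (nab x z)) y]
    rw [e1, e2, e3]
    linear_combination -h3
  -- F is symmetric in last two arguments
  have hF23 : ∀ x y z : V, F x y z = F x z y := by
    intro x y z
    rw [hstar x z y, hstar x y z]
    exact add_comm _ _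
  -- F(x, Jy, z) = -F(x, y, Jz)
  have hFJ2 : ∀ x y z : V, F x (J y) z = -(F x y (J z)) := by
    intro x y z
    rw [hF, hF]
    rw [hJJ y, hnabneg]
    have h1 : g (nab x (J y) - J (nab x y)) (J z)
        = g (J (nab x (J y) - J (nab x y))) z := (hgt _ _).symm
    rw [h1, hJsub, hJJ, ← hgnegl]
    congr 1
    abel
  -- linearity of F in the three slots
  have hFadd1 : ∀ x x' y z : V, F (x + x') y z = F x y z + F x' y z := by
    intro x x' y z
    rw [hF, hF, hF, hnab_addl, hnab_addl, hJ_add, ← hg_addl]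
    congr 1
    abel
  have hFsmul1 : ∀ (r : R) (x y z : V), F (r • x) y z = r * F x y z := by
    intro r x y z
    rw [hF, hF, hnab_smull, hnab_smull, hJ_smul, ← hg_smull]
    congr 1
    module
  have hFadd2 : ∀ x u u' z : V, F x (u + u') z = F x u z + F x u' z := by
    intro x u u' z
    rw [hF, hF, hF, hJ_add, hnab_addr, hnab_addr, hJ_add, ← hg_addl]
    congr 1
    abel
  have hFsmul2 : ∀ (x : V) (r : R) (u z : V), F x (r • u) z = r * F x u z := by
    intro x r u z
    rw [hF, hF, hJ_smul, hnab_leib, hnab_leib, hJ_add, hJ_smul, hJ_smul, ← hg_smull]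
    congr 1
    module
  have hFadd3 : ∀ x y z z' : V, F x y (z + z') = F x y z + F x y z' := by
    intro x y z z'; rw [hF, hF, hF]; exact hgaddr _ _ _
  have hFsmul3 : ∀ (x y : V) (r : R) (z : V), F x y (r • z) = r * F x y z := by
    intro x y r z; rw [hF, hF]; exact hgsmulr _ _ _
  have hFneg3 : ∀ x y z : V, F x y (-z) = -(F x y z) := by
    intro x y z; rw [hF, hF]; exact hgnegr _ _
  -- symmetry of the inverse metric
  have hsymginv : ∀ i j, ginv i j = ginv j i := by
    intro i j
    have key1 : ∀ k, (∑ l, ginv i k * (g (e l) (e k) * ginv j l))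
        = ginv i k * (if j = k then (1:R) else 0) := by
      intro k
      rw [← Finset.mul_sum]
      congr 1
      rw [← hginv j k]
      exact Finset.sum_congr rfl fun l _ => by rw [hg_symm]; ring
    have key2 : ∀ l, (∑ k, ginv i k * (g (e l) (e k) * ginv j l))
        = (if i = l then (1:R) else 0) * ginv j l := by
      intro l
      have h2 : (∑ k, ginv i k * (g (e l) (e k) * ginv j l))
          = (∑ k, ginv i k * g (e k) (e l)) * ginv j l := by
        rw [Finset.sum_mul]
        exact Finset.sum_congr rfl fun k _ => by rw [hg_symm (e l) (e k)]; ring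
      rw [h2, hginv i l]
    calc ginv i j = ∑ k, ginv i k * (if j = k then (1:R) else 0) := by
          simp
      _ = ∑ k, ∑ l, ginv i k * (g (e l) (e k) * ginv j l) :=
          Finset.sum_congr rfl fun k _ => (key1 k).symm
      _ = ∑ l, ∑ k, ginv i k * (g (e l) (e k) * ginv j l) := Finset.sum_comm
      _ = ∑ l, (if i = l then (1:R) else 0) * ginv j l :=
          Finset.sum_congr rfl fun l _ => key2 l
      _ = ginv j i := by simp
  -- expansion of any vector in the basis via the metric
  have hexp : ∀ v : V, v = ∑ k, (∑ l, ginv k l * g (e l) v) • e k := by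
    intro v
    have hcoord : ∀ j, g (∑ k, (∑ l, ginv k l * g (e l) v) • e k) (e j) = g v (e j) := by
      intro j
      have h1 : g (∑ k, (∑ l, ginv k l * g (e l) v) • e k) (e j)
          = ∑ k, (∑ l, ginv k l * g (e l) v) * g (e k) (e j) :=
        aux_expand (fun k => e k) _ (fun x => g x (e j))
          (fun a b => hg_addl a b (e j)) (fun r x => hg_smull r x (e j))
      rw [h1]
      have h2 : ∀ k, (∑ l, ginv k l * g (e l) v) * g (e k) (e j)
          = ∑ l, g (e l) v * (ginv l k * g (e k) (e j)) := by
        intro k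
        rw [Finset.sum_mul]
        exact Finset.sum_congr rfl fun l _ => by rw [hsymginv k l]; ring
      rw [Finset.sum_congr rfl fun k _ => h2 k, Finset.sum_comm]
      have h3 : ∀ l, (∑ k, g (e l) v * (ginv l k * g (e k) (e j)))
          = g (e l) v * (if l = j then (1:R) else 0) := by
        intro l
        rw [← Finset.mul_sum, hginv l j]
      rw [Finset.sum_congr rfl fun l _ => h3 l]
      simp [hg_symm]
    have hall : ∀ y, g ((∑ k, (∑ l, ginv k l * g (e l) v) • e k) - v) y = 0 := by
      intro y
      have hy := Module.Basis.sum_repr e y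
      rw [hg_symm, ← hy]
      have h4 : g (∑ k, e.repr y k • e k) ((∑ k, (∑ l, ginv k l * g (e l) v) • e k) - v)
          = ∑ k, e.repr y k * g (e k) ((∑ k, (∑ l, ginv k l * g (e l) v) • e k) - v) :=
        aux_expand (fun k => e k) _ (fun x => g x _)
          (fun a b => hg_addl a b _) (fun r x => hg_smull r x _)
      rw [h4]
      refine Finset.sum_eq_zero fun k _ => ?_
      rw [hg_symm (e k), hgsubl, hcoord k, sub_self, mul_zero]
    have h5 := hg_nd _ hall
    exact (sub_eq_zero.mp h5).symm
  have hJe : ∀ j, J (e j) = ∑ k, (∑ l, ginv k l * g (e l) (J (e j))) • e k :=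
    fun j => hexp (J (e j))
  have hgJe : ∀ i j, g (e i) (J (e j)) = g (e j) (J (e i)) := by
    intro i j
    rw [← hgt, hg_symm]
  -- relabelling of contracted indices
  have hrelabel : ∀ (A : Fin m → Fin m → R),
      (∑ i, ∑ j, ginv i j * A i j) = ∑ i, ∑ j, ginv i j * A j i := by
    intro A
    rw [Finset.sum_comm]
    exact Finset.sum_congr rfl fun i _ => Finset.sum_congr rfl fun j _ => by
      rw [hsymginv j i]
  -- first contraction: trace of (nabla_w J) vanishes
  have hC1 : ∀ w : V, (∑ i, ∑ j, ginv i j * F w (e i) (e j)) = 0 := by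
    intro w
    have hswap := aux_swap (fun k => e k) g J ginv hsymginv hgJe hJe
      (fun u v => F w u (J v))
      (fun a b v => hFadd2 w a b (J v))
      (fun r a v => hFsmul2 w r a (J v))
      (fun u a b => by
        show F w u (J (a + b)) = F w u (J a) + F w u (J b)
        rw [hJ_add]; exact hFadd3 w u (J a) (J b))
      (fun u r a => by
        show F w u (J (r • a)) = r * F w u (J a)
        rw [hJ_smul]; exact hFsmul3 w u r (J a))
    beta_reduce at hswap
    have hlhs : (∑ i, ∑ j, ginv i j * F w (e i) (J (J (e j))))
        = -(∑ i, ∑ j, ginv i j * F w (e i) (e j)) := by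
      rw [← Finset.sum_neg_distrib]
      refine Finset.sum_congr rfl fun i _ => ?_
      rw [← Finset.sum_neg_distrib]
      refine Finset.sum_congr rfl fun j _ => ?_
      rw [hJJ, hFneg3]
      ring
    have hrhs : (∑ i, ∑ j, ginv i j * F w (J (e i)) (J (e j)))
        = ∑ i, ∑ j, ginv i j * F w (e i) (e j) := by
      refine Finset.sum_congr rfl fun i _ => Finset.sum_congr rfl fun j _ => ?_
      rw [hFJ2 w (e i) (J (e j)), hJJ, hFneg3]
      ring
    rw [hlhs, hrhs] at hswap
    set S := ∑ i, ∑ j, ginv i j * F w (e i) (e j) with hS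
    have h0 : S + S = 0 + 0 := by
      nth_rewrite 1 [← hswap]
      rw [neg_add_cancel, add_zero]
    exact htwo S 0 h0
  -- second contraction: g^{ij} F(w, e_i, J e_j) = 0
  have hC2 : ∀ w : V, (∑ i, ∑ j, ginv i j * F w (e i) (J (e j))) = 0 := by
    intro w
    have hswap := aux_swap (fun k => e k) g J ginv hsymginv hgJe hJe
      (fun u v => F w u v)
      (fun a b v => hFadd2 w a b v)
      (fun r a v => hFsmul2 w r a v)
      (fun u a b => hFadd3 w u a b)
      (fun u r a => hFsmul3 w u r a)
    beta_reduce at hswap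
    have hrhs : (∑ i, ∑ j, ginv i j * F w (J (e i)) (e j))
        = -(∑ i, ∑ j, ginv i j * F w (e i) (J (e j))) := by
      rw [← Finset.sum_neg_distrib]
      refine Finset.sum_congr rfl fun i _ => ?_
      rw [← Finset.sum_neg_distrib]
      refine Finset.sum_congr rfl fun j _ => ?_
      rw [hFJ2 w (e i) (e j)]
      ring
    rw [hrhs] at hswap
    set T := ∑ i, ∑ j, ginv i j * F w (e i) (J (e j)) with hT
    have h0 : T + T = 0 + 0 := by
      nth_rewrite 1 [hswap]
      rw [neg_add_cancel, add_zero]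
    exact htwo T 0 h0
  -- the Koszul-type formula: 2 Phi(x,y,z) in terms of F
  have hP7 : ∀ x y z : V, Phi03 x y z + Phi03 x y z
      = -(F x (J z) y) - F y (J z) x + F (J z) x y := by
    intro x y z
    have h1 := hstar x y (J z)
    have h2 := hstar y x (J z)
    have h3 := hstar (J z) y x
    rw [hJJ z, hPhineg] at h1
    rw [hJJ z, hPhineg] at h2
    have s1 := hPhiSym y x z
    have s2 := hPhiSym (J z) y (J x)
    have s3 := hPhiSym (J z) x (J y)
    linear_combination h1 + h2 - h3 - s1 - s2 - s3
  -- splitting a double sum of the shape -a - b + c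
  have hsplit : ∀ (A B C : Fin m → Fin m → R),
      (∑ i, ∑ j, (-(A i j) - B i j + C i j))
        = -(∑ i, ∑ j, A i j) - (∑ i, ∑ j, B i j) + (∑ i, ∑ j, C i j) := by
    intro A B C
    simp only [Finset.sum_add_distrib, Finset.sum_sub_distrib, Finset.sum_neg_distrib]
  constructor
  · -- f = theta*
    intro z
    apply htwo
    rw [hf z, hthetas z]
    have step1 : (∑ i, ∑ j, ginv i j * Phi03 (e i) (e j) z)
          + (∑ i, ∑ j, ginv i j * Phi03 (e i) (e j) z)
        = ∑ i, ∑ j, (-(ginv i j * F (e i) (J z) (e j))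
            - ginv i j * F (e j) (J z) (e i) + ginv i j * F (J z) (e i) (e j)) := by
      rw [← Finset.sum_add_distrib]
      refine Finset.sum_congr rfl fun i _ => ?_
      rw [← Finset.sum_add_distrib]
      refine Finset.sum_congr rfl fun j _ => ?_
      have := hP7 (e i) (e j) z
      linear_combination ginv i j * this
    rw [step1, hsplit]
    -- each of the three double sums
    have hA : (∑ i, ∑ j, ginv i j * F (e i) (J z) (e j))
        = -(∑ i, ∑ j, ginv i j * F (e i) (J (e j)) z) := by
      rw [← Finset.sum_neg_distrib]
      refine Finset.sum_congr rfl fun i _ => ?_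
      rw [← Finset.sum_neg_distrib]
      refine Finset.sum_congr rfl fun j _ => ?_
      rw [hF23 (e i) (J z) (e j), hFJ2 (e i) (e j) z]
      ring
    have hB : (∑ i, ∑ j, ginv i j * F (e j) (J z) (e i))
        = -(∑ i, ∑ j, ginv i j * F (e i) (J (e j)) z) := by
      have := hrelabel (fun a b => F (e b) (J z) (e a))
      rw [this]
      exact hA
    have hCC := hC1 (J z)
    rw [hA, hB, hCC]
    ring
  · -- f* = -theta
    intro z
    apply htwo
    rw [hfs z, htheta z]
    have step1 : (∑ i, ∑ j, ginv i j * Phi03 (e i) (J (e j)) z)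
          + (∑ i, ∑ j, ginv i j * Phi03 (e i) (J (e j)) z)
        = ∑ i, ∑ j, (-(ginv i j * F (e i) (J z) (J (e j)))
            - ginv i j * F (J (e j)) (J z) (e i) + ginv i j * F (J z) (e i) (J (e j))) := by
      rw [← Finset.sum_add_distrib]
      refine Finset.sum_congr rfl fun i _ => ?_
      rw [← Finset.sum_add_distrib]
      refine Finset.sum_congr rfl fun j _ => ?_
      have := hP7 (e i) (J (e j)) z
      linear_combination ginv i j * this
    rw [step1, hsplit]
    -- term A
    have hA : (∑ i, ∑ j, ginv i j * F (e i) (J z) (J (e j)))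
        = ∑ i, ∑ j, ginv i j * F (e i) (e j) z := by
      refine Finset.sum_congr rfl fun i _ => Finset.sum_congr rfl fun j _ => ?_
      rw [hF23 (e i) (J z) (J (e j)), hFJ2 (e i) (e j) (J z), hJJ z, hFneg3]
      ring
    -- term B
    have hB : (∑ i, ∑ j, ginv i j * F (J (e j)) (J z) (e i))
        = ∑ i, ∑ j, ginv i j * F (e i) (e j) z := by
      have hrel := hrelabel (fun a b => F (J (e b)) (J z) (e a))
      rw [hrel]
      have h1 : (∑ i, ∑ j, ginv i j * F (J (e i)) (J z) (e j))
          = ∑ i, ∑ j, ginv i j * F (J (e i)) (e j) (J z) :=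
        Finset.sum_congr rfl fun i _ => Finset.sum_congr rfl fun j _ => by
          rw [hF23 (J (e i)) (J z) (e j)]
      rw [h1]
      have hswap := aux_swap (fun k => e k) g J ginv hsymginv hgJe hJe
        (fun u v => F u v (J z))
        (fun a b v => hFadd1 a b v (J z))
        (fun r a v => hFsmul1 r a v (J z))
        (fun u a b => hFadd2 u a b (J z))
        (fun u r a => hFsmul2 u r a (J z))
      beta_reduce at hswap
      rw [← hswap]
      refine Finset.sum_congr rfl fun i _ => Finset.sum_congr rfl fun j _ => ?_
      rw [hFJ2 (e i) (e j) (J z), hJJ z, hFneg3]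
      ring
    have hCC := hC2 (J z)
    rw [hA, hB, hCC]
    ring
end

section
/- On an almost Norden manifold, the 1-forms f and f* associated to the potential Φ satisfy f(z) = f*(Jz), as a consequence of the identity Φ(x,y,z) - Φ(Jx,Jy,z) - Φ(Jx,y,Jz) - Φ(x,Jy,Jz) = 0. -/
private lemma four_sum_swap' {R : Type*} [AddCommMonoid R] {m : ℕ}
    (F : Fin m → Fin m → Fin m → Fin m → R) :
    (∑ i, ∑ j, ∑ k, ∑ l, F i j k l) = ∑ k, ∑ l, ∑ i, ∑ j, F i j k l := by
  have h1 : (∑ i, ∑ j, ∑ k, ∑ l, F i j k l) = ∑ i, ∑ k, ∑ j, ∑ l, F i j k l :=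
    Finset.sum_congr rfl fun i _ => Finset.sum_comm
  have h2 : (∑ i, ∑ k, ∑ j, ∑ l, F i j k l) = ∑ k, ∑ i, ∑ j, ∑ l, F i j k l :=
    Finset.sum_comm
  have h3 : (∑ k, ∑ i, ∑ j, ∑ l, F i j k l) = ∑ k, ∑ i, ∑ l, ∑ j, F i j k l :=
    Finset.sum_congr rfl fun k _ => Finset.sum_congr rfl fun i _ => Finset.sum_comm
  have h4 : (∑ k, ∑ i, ∑ l, ∑ j, F i j k l) = ∑ k, ∑ l, ∑ i, ∑ j, F i j k l :=
    Finset.sum_congr rfl fun k _ => Finset.sum_comm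
  rw [h1, h2, h3, h4]

private lemma three_sum_swap' {R : Type*} [AddCommMonoid R] {m : ℕ}
    (F : Fin m → Fin m → Fin m → R) :
    (∑ i, ∑ j, ∑ k, F i j k) = ∑ k, ∑ j, ∑ i, F i j k := by
  have h1 : (∑ i, ∑ j, ∑ k, F i j k) = ∑ i, ∑ k, ∑ j, F i j k :=
    Finset.sum_congr rfl fun i _ => Finset.sum_comm
  have h2 : (∑ i, ∑ k, ∑ j, F i j k) = ∑ k, ∑ i, ∑ j, F i j k := Finset.sum_comm
  have h3 : (∑ k, ∑ i, ∑ j, F i j k) = ∑ k, ∑ j, ∑ i, F i j k :=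
    Finset.sum_congr rfl fun k _ => Finset.sum_comm
  rw [h1, h2, h3]

/-- The 1-forms f, f* of the potential satisfy f(z) = f*(Jz), as a consequence of
Φ(x,y,z) - Φ(Jx,Jy,z) - Φ(Jx,y,Jz) - Φ(x,Jy,Jz) = 0. -/
theorem potential_one_forms_J_relation
    (R : Type*) [CommRing R] [Algebra ℝ R]
    (V : Type*) [AddCommGroup V] [Module R V] [Module ℝ V] [IsScalarTower ℝ R V]
    [LieRing V]
    (Dop : V → R → R) (g : V → V → R) (J : V → V) (nab : V → V → V)
    (hg_symm : ∀ x y, g x y = g y x)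
    (hg_addl : ∀ x x' y, g (x + x') y = g x y + g x' y)
    (hg_smull : ∀ (f : R) x y, g (f • x) y = f * g x y)
    (hg_nd : ∀ x, (∀ y, g x y = 0) → x = 0)
    (hJ_add : ∀ x y, J (x + y) = J x + J y)
    (hJ_smul : ∀ (f : R) x, J (f • x) = f • J x)
    (hJJ : ∀ x, J (J x) = -x)
    (hNorden : ∀ x y, g (J x) (J y) = -(g x y))
    (hD_add : ∀ x a b, Dop x (a + b) = Dop x a + Dop x b)
    (hD_mul : ∀ x a b, Dop x (a * b) = Dop x a * b + a * Dop x b)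
    (hnab_addl : ∀ x x' y, nab (x + x') y = nab x y + nab x' y)
    (hnab_smull : ∀ (f : R) x y, nab (f • x) y = f • nab x y)
    (hnab_addr : ∀ x y y', nab x (y + y') = nab x y + nab x y')
    (hnab_leib : ∀ (f : R) x y, nab x (f • y) = Dop x f • y + f • nab x y)
    (hTF : ∀ x y, nab x y - nab y x = ⁅x, y⁆)
    (hMC : ∀ x y z, Dop x (g y z) = g (nab x y) z + g y (nab x z))
    (nab' : V → V → V)
    (hnab'_addl : ∀ x x' y, nab' (x + x') y = nab' x y + nab' x' y)
    (hnab'_smull : ∀ (f : R) x y, nab' (f • x) y = f • nab' x y)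
    (hnab'_addr : ∀ x y y', nab' x (y + y') = nab' x y + nab' x y')
    (hnab'_leib : ∀ (f : R) x y, nab' x (f • y) = Dop x f • y + f • nab' x y)
    (hTF' : ∀ x y, nab' x y - nab' y x = ⁅x, y⁆)
    (hMC' : ∀ x y z, Dop x (g y (J z)) = g (nab' x y) (J z) + g y (J (nab' x z)))
    (m : ℕ) (e : Module.Basis (Fin m) R V) (ginv : Fin m → Fin m → R)
    (hginv : ∀ i j, (∑ k, ginv i k * g (e k) (e j)) = if i = j then (1:R) else 0)
    (hginv2 : ∀ i j, (∑ k, g (e i) (e k) * ginv k j) = if i = j then (1:R) else 0)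
    (Phi03 : V → V → V → R)
    (hPhi03 : ∀ x y z, Phi03 x y z = g (nab' x y - nab x y) z)
    (hPhiId : ∀ x y z,
      Phi03 x y z - Phi03 (J x) (J y) z - Phi03 (J x) y (J z) - Phi03 x (J y) (J z) = 0)
    (f fs : V → R)
    (hf : ∀ z, f z = ∑ i, ∑ j, ginv i j * Phi03 (e i) (e j) z)
    (hfs : ∀ z, fs z = ∑ i, ∑ j, ginv i j * Phi03 (e i) (J (e j)) z) :
    ∀ z, f z = fs (J z) := by
  classical
  intro z
  -- coefficients of J in the basis
  set A : Fin m → Fin m → R := fun k i => e.repr (J (e i)) k with hAdef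
  have hJe : ∀ i, J (e i) = ∑ k, A k i • e k := fun i => (e.sum_repr (J (e i))).symm
  -- right linearity of g
  have hg_addr : ∀ x y y', g x (y + y') = g x y + g x y' := by
    intro x y y'; rw [hg_symm, hg_addl, hg_symm y x, hg_symm y' x]
  have hg_smulr : ∀ (c : R) x y, g x (c • y) = c * g x y := by
    intro c x y; rw [hg_symm, hg_smull, hg_symm]
  have hg_negr : ∀ x y, g x (-y) = -(g x y) := by
    intro x y
    have h := hg_smulr (-1) x y
    rw [neg_one_smul] at h
    rw [h]; ring
  -- J is g-symmetric
  have hJsym : ∀ x y, g (J x) y = g x (J y) := by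
    intro x y
    have h := hNorden x (J y)
    rw [hJJ, hg_negr] at h
    exact neg_injective h
  -- bilinearity of Phi03 in the first two slots
  have hPhi_addl : ∀ x x' y w, Phi03 (x + x') y w = Phi03 x y w + Phi03 x' y w := by
    intro x x' y w
    simp only [hPhi03, hnab_addl, hnab'_addl]
    rw [show nab' x y + nab' x' y - (nab x y + nab x' y)
        = (nab' x y - nab x y) + (nab' x' y - nab x' y) by abel, hg_addl]
  have hPhi_smull : ∀ (c : R) x y w, Phi03 (c • x) y w = c * Phi03 x y w := by
    intro c x y w
    simp only [hPhi03, hnab_smull, hnab'_smull, ← smul_sub, hg_smull]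
  have hPhi_addr : ∀ x y y' w, Phi03 x (y + y') w = Phi03 x y w + Phi03 x y' w := by
    intro x y y' w
    simp only [hPhi03, hnab_addr, hnab'_addr]
    rw [show nab' x y + nab' x y' - (nab x y + nab x y')
        = (nab' x y - nab x y) + (nab' x y' - nab x y') by abel, hg_addl]
  have hPhi_smulr : ∀ (c : R) x y w, Phi03 x (c • y) w = c * Phi03 x y w := by
    intro c x y w
    simp only [hPhi03, hnab_leib, hnab'_leib]
    rw [show Dop x c • y + c • nab' x y - (Dop x c • y + c • nab x y)
        = c • (nab' x y - nab x y) by rw [smul_sub]; abel, hg_smull]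
  -- expansion of an additive, R-homogeneous map over basis sums
  have hsum : ∀ (B : V → R), (∀ a b, B (a + b) = B a + B b) → (∀ (c : R) v, B (c • v) = c * B v) →
      ∀ i, B (J (e i)) = ∑ k, A k i * B (e k) := by
    intro B hadd hsm i
    have hB : ∀ (s : Finset (Fin m)) (c : Fin m → R),
        B (∑ k ∈ s, c k • e k) = ∑ k ∈ s, c k * B (e k) := by
      intro s c
      induction s using Finset.induction with
      | empty => simpa using hsm 0 0
      | insert a s h ih =>
          rw [Finset.sum_insert h, hadd, hsm, ih, Finset.sum_insert h]
    rw [hJe i, hB]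
  have hPhiJl : ∀ y w i, Phi03 (J (e i)) y w = ∑ k, A k i * Phi03 (e k) y w := by
    intro y w i
    exact hsum (fun v => Phi03 v y w) (fun a b => hPhi_addl a b y w)
      (fun c v => hPhi_smull c v y w) i
  have hPhiJr : ∀ x w j, Phi03 x (J (e j)) w = ∑ l, A l j * Phi03 x (e l) w := by
    intro x w j
    exact hsum (fun v => Phi03 x v w) (fun a b => hPhi_addr x a b w)
      (fun c v => hPhi_smulr c x v w) j
  have hgJl : ∀ y i, g (J (e i)) y = ∑ k, A k i * g (e k) y := by
    intro y i
    exact hsum (fun v => g v y) (fun a b => hg_addl a b y) (fun c v => hg_smull c v y) i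
  have hgJr : ∀ x j, g x (J (e j)) = ∑ l, A l j * g x (e l) := by
    intro x j
    exact hsum (fun v => g x v) (fun a b => hg_addr x a b) (fun c v => hg_smulr c x v) j
  -- J of basis sums
  have hJsum : ∀ (s : Finset (Fin m)) (c : Fin m → R),
      J (∑ k ∈ s, c k • e k) = ∑ k ∈ s, c k • J (e k) := by
    intro s c
    induction s using Finset.induction with
    | empty =>
        have h0 : J 0 = 0 := by simpa using hJ_smul 0 0
        simpa using h0
    | insert a s h ih =>
        rw [Finset.sum_insert h, hJ_add, hJ_smul, ih, Finset.sum_insert h]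
  -- matrices
  set Gm : Matrix (Fin m) (Fin m) R := Matrix.of (fun i j => g (e i) (e j)) with hGmdef
  set Gi : Matrix (Fin m) (Fin m) R := Matrix.of ginv with hGidef
  set Am : Matrix (Fin m) (Fin m) R := Matrix.of (fun k i => A k i) with hAmdef
  have hGiG : Gi * Gm = 1 := by
    ext i j
    simpa [hGidef, hGmdef, Matrix.mul_apply, Matrix.one_apply] using hginv i j
  have hGGi : Gm * Gi = 1 := by
    ext i j
    simpa [hGidef, hGmdef, Matrix.mul_apply, Matrix.one_apply] using hginv2 i j
  have hAA : Am * Am = -1 := by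
    ext k i
    have h1 : J (J (e i)) = ∑ k', (∑ j, A k' j * A j i) • e k' := by
      rw [hJe i, hJsum]
      calc (∑ j, A j i • J (e j)) = ∑ j, A j i • ∑ k', A k' j • e k' := by
            refine Finset.sum_congr rfl fun j _ => by rw [hJe j]
        _ = ∑ j, ∑ k', (A j i * A k' j) • e k' := by
            refine Finset.sum_congr rfl fun j _ => by
              rw [Finset.smul_sum]
              exact Finset.sum_congr rfl fun k' _ => by rw [smul_smul]
        _ = ∑ k', ∑ j, (A j i * A k' j) • e k' := Finset.sum_comm
        _ = ∑ k', (∑ j, A k' j * A j i) • e k' := by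
            refine Finset.sum_congr rfl fun k' _ => by
              rw [Finset.sum_smul]
              exact Finset.sum_congr rfl fun j _ => by rw [mul_comm]
    have h2 : (∑ j, A k j * A j i) = e.repr (-(e i)) k := by
      rw [← hJJ (e i), h1]
      rw [Module.Basis.repr_sum_self]
    have h3 : e.repr (-(e i)) k = -(if k = i then (1:R) else 0) := by
      rw [map_neg]
      simp [Module.Basis.repr_self, Finsupp.single_apply, eq_comm]
    simp only [hAmdef, Matrix.mul_apply, Matrix.of_apply, Matrix.neg_apply, Matrix.one_apply]
    rw [h2, h3]
  -- symmetry: Amᵀ * Gm = Gm * Am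
  have hSm : Am.transpose * Gm = Gm * Am := by
    ext i j
    have hl : (Am.transpose * Gm) i j = g (J (e i)) (e j) := by
      rw [hgJl]
      simp [hAmdef, hGmdef, Matrix.mul_apply, Matrix.transpose_apply]
    have hr : (Gm * Am) i j = g (e i) (J (e j)) := by
      rw [hgJr]
      simp only [hAmdef, hGmdef, Matrix.mul_apply, Matrix.of_apply]
      exact Finset.sum_congr rfl fun k _ => mul_comm _ _
    rw [hl, hr, hJsym]
  -- matrix algebra
  have hM1 : Am * Gi = Gi * Am.transpose := by
    calc Am * Gi = 1 * (Am * Gi) := by rw [one_mul]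
      _ = Gi * Gm * (Am * Gi) := by rw [hGiG]
      _ = Gi * (Gm * Am) * Gi := by rw [mul_assoc, mul_assoc, mul_assoc]
      _ = Gi * (Am.transpose * Gm) * Gi := by rw [hSm]
      _ = Gi * Am.transpose * (Gm * Gi) := by rw [mul_assoc, mul_assoc, mul_assoc]
      _ = Gi * Am.transpose := by rw [hGGi, mul_one]
  have hM2 : Am * Gi * Am.transpose = -Gi := by
    rw [hM1, mul_assoc, ← Matrix.transpose_mul, hAA]
    simp
  -- contraction computations
  have hT2 : (∑ i, ∑ j, ginv i j * Phi03 (J (e i)) (J (e j)) z) = -(f z) := by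
    have step : (∑ i, ∑ j, ginv i j * Phi03 (J (e i)) (J (e j)) z)
        = ∑ i, ∑ j, ∑ k, ∑ l, ginv i j * A k i * A l j * Phi03 (e k) (e l) z := by
      refine Finset.sum_congr rfl fun i _ => Finset.sum_congr rfl fun j _ => ?_
      rw [hPhiJl]
      rw [Finset.mul_sum]
      refine Finset.sum_congr rfl fun k _ => ?_
      rw [hPhiJr]
      simp only [Finset.mul_sum]
      refine Finset.sum_congr rfl fun l _ => ?_
      ring
    rw [step, four_sum_swap']
    have step2 : ∀ k l : Fin m, (∑ i, ∑ j, ginv i j * A k i * A l j * Phi03 (e k) (e l) z)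
        = (Am * Gi * Am.transpose) k l * Phi03 (e k) (e l) z := by
      intro k l
      simp only [Matrix.mul_apply, hAmdef, hGidef, Matrix.of_apply, Matrix.transpose_apply,
        Finset.sum_mul]
      rw [Finset.sum_comm]
      refine Finset.sum_congr rfl fun j _ => ?_
      refine Finset.sum_congr rfl fun i _ => ?_
      ring
    calc (∑ k, ∑ l, ∑ i, ∑ j, ginv i j * A k i * A l j * Phi03 (e k) (e l) z)
        = ∑ k, ∑ l, (Am * Gi * Am.transpose) k l * Phi03 (e k) (e l) z := by
          exact Finset.sum_congr rfl fun k _ => Finset.sum_congr rfl fun l _ => step2 k l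
      _ = ∑ k, ∑ l, -(ginv k l * Phi03 (e k) (e l) z) := by
          rw [hM2]
          refine Finset.sum_congr rfl fun k _ => Finset.sum_congr rfl fun l _ => ?_
          simp [hGidef, neg_mul]
      _ = -(f z) := by rw [hf]; simp
  have hT3 : (∑ i, ∑ j, ginv i j * Phi03 (J (e i)) (e j) (J z)) = fs (J z) := by
    have step : (∑ i, ∑ j, ginv i j * Phi03 (J (e i)) (e j) (J z))
        = ∑ i, ∑ j, ∑ k, ginv i j * A k i * Phi03 (e k) (e j) (J z) := by
      refine Finset.sum_congr rfl fun i _ => Finset.sum_congr rfl fun j _ => ?_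
      rw [hPhiJl, Finset.mul_sum]
      refine Finset.sum_congr rfl fun k _ => ?_
      ring
    have step' : (fs (J z)) = ∑ i, ∑ j, ∑ l, ginv i j * A l j * Phi03 (e i) (e l) (J z) := by
      rw [hfs]
      refine Finset.sum_congr rfl fun i _ => Finset.sum_congr rfl fun j _ => ?_
      rw [hPhiJr, Finset.mul_sum]
      refine Finset.sum_congr rfl fun l _ => ?_
      ring
    rw [step, step', three_sum_swap']
    -- LHS: ∑ k, ∑ j, ∑ i, ginv i j * A k i * Phi03 (e k) (e j) (J z)
    -- RHS: ∑ i, ∑ j, ∑ l, ginv i j * A l j * Phi03 (e i) (e l) (J z)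
    have hL : ∀ k j : Fin m, (∑ i, ginv i j * A k i * Phi03 (e k) (e j) (J z))
        = (Am * Gi) k j * Phi03 (e k) (e j) (J z) := by
      intro k j
      simp only [Matrix.mul_apply, hAmdef, hGidef, Matrix.of_apply, Finset.sum_mul]
      refine Finset.sum_congr rfl fun i _ => ?_
      ring
    have hR : ∀ i l : Fin m, (∑ j, ginv i j * A l j * Phi03 (e i) (e l) (J z))
        = (Gi * Am.transpose) i l * Phi03 (e i) (e l) (J z) := by
      intro i l
      simp only [Matrix.mul_apply, hAmdef, hGidef, Matrix.of_apply, Matrix.transpose_apply,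
        Finset.sum_mul]
      all_goals exact Finset.sum_congr rfl fun j _ => by ring
    calc (∑ k, ∑ j, ∑ i, ginv i j * A k i * Phi03 (e k) (e j) (J z))
        = ∑ k, ∑ j, (Am * Gi) k j * Phi03 (e k) (e j) (J z) :=
          Finset.sum_congr rfl fun k _ => Finset.sum_congr rfl fun j _ => hL k j
      _ = ∑ k, ∑ j, (Gi * Am.transpose) k j * Phi03 (e k) (e j) (J z) := by rw [hM1]
      _ = ∑ i, ∑ l, ∑ j, ginv i j * A l j * Phi03 (e i) (e l) (J z) :=
          Finset.sum_congr rfl fun i _ => Finset.sum_congr rfl fun l _ => (hR i l).symm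
      _ = ∑ i, ∑ j, ∑ l, ginv i j * A l j * Phi03 (e i) (e l) (J z) :=
          Finset.sum_congr rfl fun i _ => Finset.sum_comm
  have hT4 : (∑ i, ∑ j, ginv i j * Phi03 (e i) (J (e j)) (J z)) = fs (J z) := by
    rw [hfs]
  -- contract the fundamental identity
  have h0 : (∑ i, ∑ j, ginv i j *
      (Phi03 (e i) (e j) z - Phi03 (J (e i)) (J (e j)) z
        - Phi03 (J (e i)) (e j) (J z) - Phi03 (e i) (J (e j)) (J z))) = 0 := by
    refine Finset.sum_eq_zero fun i _ => Finset.sum_eq_zero fun j _ => ?_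
    rw [hPhiId, mul_zero]
  have hexp0 : (∑ i, ∑ j, ginv i j *
      (Phi03 (e i) (e j) z - Phi03 (J (e i)) (J (e j)) z
        - Phi03 (J (e i)) (e j) (J z) - Phi03 (e i) (J (e j)) (J z)))
      = f z - (-(f z)) - fs (J z) - fs (J z) := by
    have : (∑ i, ∑ j, ginv i j *
        (Phi03 (e i) (e j) z - Phi03 (J (e i)) (J (e j)) z
          - Phi03 (J (e i)) (e j) (J z) - Phi03 (e i) (J (e j)) (J z)))
        = (∑ i, ∑ j, ginv i j * Phi03 (e i) (e j) z)
          - (∑ i, ∑ j, ginv i j * Phi03 (J (e i)) (J (e j)) z)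
          - (∑ i, ∑ j, ginv i j * Phi03 (J (e i)) (e j) (J z))
          - (∑ i, ∑ j, ginv i j * Phi03 (e i) (J (e j)) (J z)) := by
      simp only [mul_sub, Finset.sum_sub_distrib]
    rw [this, ← hf, hT2, hT3, hT4]
  have hkey : f z + f z = fs (J z) + fs (J z) := by
    have := hexp0.symm.trans h0
    -- f z + f z - fs (J z) - fs (J z) = 0
    have h' : f z + f z - fs (J z) - fs (J z) = 0 := by
      rw [← this]; ring
    linear_combination h'
  have h2 : (2:ℝ) • f z = (2:ℝ) • fs (J z) := by
    rw [two_smul, two_smul]; exact hkey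
  calc f z = ((2:ℝ)⁻¹ * 2) • f z := by norm_num
    _ = (2:ℝ)⁻¹ • ((2:ℝ) • f z) := by rw [mul_smul]
    _ = (2:ℝ)⁻¹ • ((2:ℝ) • fs (J z)) := by rw [h2]
    _ = ((2:ℝ)⁻¹ * 2) • fs (J z) := by rw [mul_smul]
    _ = fs (J z) := by norm_num
end

section
/- The Lee forms θ and θ* are invariant under the twin interchange: θ̃ = θ and θ̃* = θ*, where θ̃, θ̃* are the Lee forms computed from g̃ and its Levi-Civita connection ∇̃. -/
private lemma sum_hom_R {R V : Type*} [CommRing R] [AddCommGroup V] [Module R V]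
    (φ : V → R) (hadd : ∀ a b, φ (a + b) = φ a + φ b) (hsm : ∀ (c : R) a, φ (c • a) = c * φ a)
    {m : ℕ} (c : Fin m → R) (v : Fin m → V) :
    φ (∑ k, c k • v k) = ∑ k, c k * φ (v k) := by
  have h := map_sum (AddMonoidHom.mk' φ hadd) (fun k => c k • v k) Finset.univ
  exact h.trans (Finset.sum_congr rfl fun k _ => hsm _ _)

private lemma sum_hom_V {R V : Type*} [CommRing R] [AddCommGroup V] [Module R V]
    (ψ : V → V) (hadd : ∀ a b, ψ (a + b) = ψ a + ψ b) (hsm : ∀ (c : R) a, ψ (c • a) = c • ψ a)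
    {m : ℕ} (c : Fin m → R) (v : Fin m → V) :
    ψ (∑ k, c k • v k) = ∑ k, c k • ψ (v k) := by
  have h := map_sum (AddMonoidHom.mk' ψ hadd) (fun k => c k • v k) Finset.univ
  exact h.trans (Finset.sum_congr rfl fun k _ => hsm _ _)

/-- The Lee forms are invariant under the twin interchange: θ̃ = θ and θ̃* = θ*, where
θ̃, θ̃* are the traces (with respect to g̃) of F̃(x,y,z) = g̃((∇̃ₓJ)y, z). -/
theorem lee_forms_twin_invariant
    (R : Type*) [CommRing R] [Algebra ℝ R]
    (V : Type*) [AddCommGroup V] [Module R V] [Module ℝ V] [IsScalarTower ℝ R V]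
    [LieRing V]
    (Dop : V → R → R) (g : V → V → R) (J : V → V) (nab : V → V → V)
    (hg_symm : ∀ x y, g x y = g y x)
    (hg_addl : ∀ x x' y, g (x + x') y = g x y + g x' y)
    (hg_smull : ∀ (f : R) x y, g (f • x) y = f * g x y)
    (hg_nd : ∀ x, (∀ y, g x y = 0) → x = 0)
    (hJ_add : ∀ x y, J (x + y) = J x + J y)
    (hJ_smul : ∀ (f : R) x, J (f • x) = f • J x)
    (hJJ : ∀ x, J (J x) = -x)
    (hNorden : ∀ x y, g (J x) (J y) = -(g x y))
    (hD_add : ∀ x a b, Dop x (a + b) = Dop x a + Dop x b)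
    (hD_mul : ∀ x a b, Dop x (a * b) = Dop x a * b + a * Dop x b)
    (hnab_addl : ∀ x x' y, nab (x + x') y = nab x y + nab x' y)
    (hnab_smull : ∀ (f : R) x y, nab (f • x) y = f • nab x y)
    (hnab_addr : ∀ x y y', nab x (y + y') = nab x y + nab x y')
    (hnab_leib : ∀ (f : R) x y, nab x (f • y) = Dop x f • y + f • nab x y)
    (hTF : ∀ x y, nab x y - nab y x = ⁅x, y⁆)
    (hMC : ∀ x y z, Dop x (g y z) = g (nab x y) z + g y (nab x z))
    (nab' : V → V → V)
    (hnab'_addl : ∀ x x' y, nab' (x + x') y = nab' x y + nab' x' y)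
    (hnab'_smull : ∀ (f : R) x y, nab' (f • x) y = f • nab' x y)
    (hnab'_addr : ∀ x y y', nab' x (y + y') = nab' x y + nab' x y')
    (hnab'_leib : ∀ (f : R) x y, nab' x (f • y) = Dop x f • y + f • nab' x y)
    (hTF' : ∀ x y, nab' x y - nab' y x = ⁅x, y⁆)
    (hMC' : ∀ x y z, Dop x (g y (J z)) = g (nab' x y) (J z) + g y (J (nab' x z)))
    (F : V → V → V → R)
    (hF : ∀ x y z, F x y z = g (nab x (J y) - J (nab x y)) z)
    (m : ℕ) (e : Module.Basis (Fin m) R V) (ginv : Fin m → Fin m → R)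
    (hginv : ∀ i j, (∑ k, ginv i k * g (e k) (e j)) = if i = j then (1:R) else 0)
    (hginv2 : ∀ i j, (∑ k, g (e i) (e k) * ginv k j) = if i = j then (1:R) else 0)
    (gtinv : Fin m → Fin m → R)
    (hgtinv : ∀ i j, (∑ k, gtinv i k * g (e k) (J (e j))) = if i = j then (1:R) else 0)
    (hgtinv2 : ∀ i j, (∑ k, g (e i) (J (e k)) * gtinv k j) = if i = j then (1:R) else 0)
    (Ft : V → V → V → R)
    (hFt : ∀ x y z, Ft x y z = g (nab' x (J y) - J (nab' x y)) (J z))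
    (theta thetas thetat thetats : V → R)
    (htheta : ∀ z, theta z = ∑ i, ∑ j, ginv i j * F (e i) (e j) z)
    (hthetas : ∀ z, thetas z = ∑ i, ∑ j, ginv i j * F (e i) (J (e j)) z)
    (hthetat : ∀ z, thetat z = ∑ i, ∑ j, gtinv i j * Ft (e i) (e j) z)
    (hthetats : ∀ z, thetats z = ∑ i, ∑ j, gtinv i j * Ft (e i) (J (e j)) z) :
    (∀ z, thetat z = theta z) ∧ (∀ z, thetats z = thetas z) := by
  -- ring facts
  have h2R : IsUnit (2:R) := by
    have h := IsUnit.map (algebraMap ℝ R) (isUnit_iff_ne_zero.mpr (two_ne_zero (α := ℝ)))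
    rwa [map_ofNat] at h
  have cancel2 : ∀ a b : R, 2 * a = 2 * b → a = b := fun a b h => h2R.mul_left_cancel h
  -- basic linearity consequences
  have hg_addr : ∀ x a b, g x (a + b) = g x a + g x b := by
    intro x a b; rw [hg_symm x (a+b), hg_addl, hg_symm a x, hg_symm b x]
  have hg_smulr : ∀ (c : R) x a, g x (c • a) = c * g x a := by
    intro c x a; rw [hg_symm x (c • a), hg_smull, hg_symm a x]
  have hg_subl : ∀ a b c, g (a - b) c = g a c - g b c := fun a b c =>
    map_sub (AddMonoidHom.mk' (fun v => g v c) (fun p q => hg_addl p q c)) a b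
  have hg_negl : ∀ a c, g (-a) c = -(g a c) := fun a c =>
    map_neg (AddMonoidHom.mk' (fun v => g v c) (fun p q => hg_addl p q c)) a
  have hg_addr' : ∀ x a b, g x (a + b) = g x a + g x b := hg_addr
  have hg_negr : ∀ x a, g x (-a) = -(g x a) := fun x a =>
    map_neg (AddMonoidHom.mk' (g x) (hg_addr x)) a
  have hg_subr : ∀ x a b, g x (a - b) = g x a - g x b := fun x a b =>
    map_sub (AddMonoidHom.mk' (g x) (hg_addr x)) a b
  have hJneg : ∀ a, J (-a) = -(J a) := fun a => map_neg (AddMonoidHom.mk' J hJ_add) a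
  have hJsub : ∀ a b, J (a - b) = J a - J b := fun a b => map_sub (AddMonoidHom.mk' J hJ_add) a b
  have hnab_negr : ∀ x y, nab x (-y) = -(nab x y) := fun x y =>
    map_neg (AddMonoidHom.mk' (nab x) (hnab_addr x)) y
  have hnab'_negr : ∀ x y, nab' x (-y) = -(nab' x y) := fun x y =>
    map_neg (AddMonoidHom.mk' (nab' x) (hnab'_addr x)) y
  have hnab_negl : ∀ x y, nab (-x) y = -(nab x y) := fun x y =>
    map_neg (AddMonoidHom.mk' (fun v => nab v y) (fun a b => hnab_addl a b y)) x
  have hgJ : ∀ x y, g (J x) y = g x (J y) := by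
    intro x y
    have h := hNorden x (J y)
    rw [hJJ y, hg_negr] at h
    exact neg_injective h
  -- F is trilinear
  have hFneg3 : ∀ x y a, F x y (-a) = -(F x y a) := by
    intro x y a; rw [hF, hF, hg_negr]
  have hFadd2 : ∀ x a b z, F x (a + b) z = F x a z + F x b z := by
    intro x a b z
    rw [hF, hF, hF, ← hg_addl]
    congr 1
    rw [hJ_add a b, hnab_addr x (J a) (J b), hnab_addr x a b, hJ_add (nab x a) (nab x b)]
    abel
  have hFsmul2 : ∀ x (c : R) a z, F x (c • a) z = c * F x a z := by
    intro x c a z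
    rw [hF, hF, ← hg_smull]
    congr 1
    rw [hJ_smul c a, hnab_leib c x (J a), hnab_leib c x a, hJ_add, hJ_smul, hJ_smul, smul_sub]
    abel
  have hFneg2 : ∀ x a z, F x (-a) z = -(F x a z) := by
    intro x a z
    have h := hFsmul2 x (-1 : R) a z
    rwa [neg_one_smul, neg_one_mul] at h
  have hFneg1 : ∀ x y z, F (-x) y z = -(F x y z) := by
    intro x y z
    rw [hF, hF, ← hg_negl]
    congr 1
    rw [hnab_negl, hnab_negl, hJneg]
    abel
  -- F symmetric in last two slots
  have hFsym : ∀ x y z, F x y z = F x z y := by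
    intro x y z
    have h1 := hMC x (J y) z
    have h2 := hMC x y (J z)
    have h3 := congrArg (Dop x) (hgJ y z)
    rw [hF, hF, hg_subl, hg_subl, hgJ (nab x y) z, hgJ (nab x z) y]
    linear_combination -h1 + h2 + h3 - hg_symm (J y) (nab x z) + hg_symm y (nab x (J z))
  -- F(x,y,Jz) = -F(x,z,Jy)
  have hFJ3 : ∀ x y z, F x y (J z) = -(F x z (J y)) := by
    intro x y z
    have h1 := hMC x (J y) (J z)
    have h2 := hMC x y z
    have h3 := congrArg (Dop x) (hNorden y z)
    have h4 : Dop x (-(g y z)) = -(Dop x (g y z)) :=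
      map_neg (AddMonoidHom.mk' (Dop x) (hD_add x)) (g y z)
    rw [hF, hF, hg_subl, hg_subl, hNorden (nab x y) z, hNorden (nab x z) y]
    linear_combination -h1 - h2 + h3 + h4 - hg_symm (J y) (nab x (J z)) - hg_symm y (nab x z)
  have hFJ2 : ∀ x y z, F x (J y) z = -(F x y (J z)) := by
    intro x y z
    rw [hFsym x (J y) z]
    exact hFJ3 x z y
  have hFJJ : ∀ x y z, F x (J y) (J z) = F x y z := by
    intro x y z
    rw [hFJ2 x y (J z), hJJ z, hFneg3, neg_neg]
  -- the difference tensor identities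
  have hPhisym : ∀ x y, nab' x y - nab x y = nab' y x - nab y x := by
    intro x y
    have h := (hTF' x y).trans (hTF x y).symm
    exact sub_eq_sub_iff_sub_eq_sub.mp h
  have hK : ∀ x y z, g (nab' x y - nab x y) (J z) + g (nab' x z - nab x z) (J y) = F x z y := by
    intro x y z
    have h1 := hMC' x y z
    have h2 := hMC x y (J z)
    rw [hF, hg_subl, hg_subl, hg_subl]
    linear_combination -h1 + h2 - hg_symm y (J (nab' x z)) - hgJ (nab' x z) y
      + hg_symm y (nab x (J z)) + hgJ (nab x z) y
  have h2T : ∀ x y z, 2 * g (nab' x y - nab x y) (J z) = F x z y + F y x z - F z y x := by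
    intro x y z
    have A1 := hK x y z
    have A2 := hK y z x
    have A3 := hK z x y
    have s1 : g (nab' y x - nab y x) (J z) = g (nab' x y - nab x y) (J z) :=
      congrArg (fun v => g v (J z)) (hPhisym y x)
    have s2 : g (nab' z x - nab z x) (J y) = g (nab' x z - nab x z) (J y) :=
      congrArg (fun v => g v (J y)) ((hPhisym x z).symm)
    have s3 : g (nab' z y - nab z y) (J x) = g (nab' y z - nab y z) (J x) :=
      congrArg (fun v => g v (J x)) ((hPhisym y z).symm)
    linear_combination A1 + A2 - A3 - s1 + s2 + s3
  -- the fundamental twin formula: 2*Ft in terms of F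
  have h2Ft : ∀ x y z, 2 * Ft x y z =
      2 * F x y (J z) + (F x z (J y) + F (J y) x z - F z (J y) x)
        - (F x (J z) y + F y x (J z) - F (J z) y x) := by
    intro x y z
    have hsplit : Ft x y z = F x y (J z) + g (nab' x (J y) - nab x (J y)) (J z)
        - g (nab' x y - nab x y) (J (J z)) := by
      rw [hFt, hF]
      have hv : nab' x (J y) - J (nab' x y) =
          (nab x (J y) - J (nab x y)) + (nab' x (J y) - nab x (J y)) -
            (J (nab' x y) - J (nab x y)) := by abel
      rw [hv, hg_subl, hg_addl]
      have : g (J (nab' x y) - J (nab x y)) (J z) = g (nab' x y - nab x y) (J (J z)) := by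
        rw [← hJsub, hgJ]
      rw [this]
    have t1 := h2T x (J y) z
    have t2 := h2T x y (J z)
    linear_combination 2 * hsplit + t1 - t2
  -- Ft linearity in the middle slot
  have hFt2add : ∀ x a b z, Ft x (a + b) z = Ft x a z + Ft x b z := by
    intro x a b z
    rw [hFt, hFt, hFt, ← hg_addl]
    congr 1
    rw [hJ_add a b, hnab'_addr x (J a) (J b), hnab'_addr x a b, hJ_add (nab' x a) (nab' x b)]
    abel
  have hFt2smul : ∀ x (c : R) a z, Ft x (c • a) z = c * Ft x a z := by
    intro x c a z
    rw [hFt, hFt, ← hg_smull]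
    congr 1
    rw [hJ_smul c a, hnab'_leib c x (J a), hnab'_leib c x a, hJ_add, hJ_smul, hJ_smul, smul_sub]
    abel
  have hFt2neg : ∀ x a z, Ft x (-a) z = -(Ft x a z) := by
    intro x a z
    have h := hFt2smul x (-1 : R) a z
    rwa [neg_one_smul, neg_one_mul] at h
  -- symmetric inverse matrices
  have ginv_sym : ∀ i j, ginv i j = ginv j i := by
    intro i j
    have key : ∀ a b : Fin m, ginv a b = ∑ k, ∑ l, ginv a k * (ginv b l * g (e l) (e k)) := by
      intro a b
      calc ginv a b = ∑ k, ginv a k * (if b = k then (1:R) else 0) := by simp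
        _ = ∑ k, ginv a k * (∑ l, ginv b l * g (e l) (e k)) := by
            refine Finset.sum_congr rfl fun k _ => ?_
            rw [hginv b k]
        _ = ∑ k, ∑ l, ginv a k * (ginv b l * g (e l) (e k)) := by
            refine Finset.sum_congr rfl fun k _ => ?_
            rw [Finset.mul_sum]
    rw [key i j, key j i, Finset.sum_comm]
    refine Finset.sum_congr rfl fun k _ => Finset.sum_congr rfl fun l _ => ?_
    rw [hg_symm (e l) (e k)]
    ring
  have gts : ∀ k j : Fin m, g (e k) (J (e j)) = g (e j) (J (e k)) := by
    intro k j
    rw [← hgJ, hg_symm]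
  have gtinv_sym : ∀ i j, gtinv i j = gtinv j i := by
    intro i j
    have key : ∀ a b : Fin m, gtinv a b = ∑ k, ∑ l, gtinv a k * (gtinv b l * g (e l) (J (e k))) := by
      intro a b
      calc gtinv a b = ∑ k, gtinv a k * (if b = k then (1:R) else 0) := by simp
        _ = ∑ k, gtinv a k * (∑ l, gtinv b l * g (e l) (J (e k))) := by
            refine Finset.sum_congr rfl fun k _ => ?_
            rw [hgtinv b k]
        _ = ∑ k, ∑ l, gtinv a k * (gtinv b l * g (e l) (J (e k))) := by
            refine Finset.sum_congr rfl fun k _ => ?_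
            rw [Finset.mul_sum]
    rw [key i j, key j i, Finset.sum_comm]
    refine Finset.sum_congr rfl fun k _ => Finset.sum_congr rfl fun l _ => ?_
    rw [gts l k]
    ring
  -- coordinates of J in the basis
  have hrepr : ∀ k, (∑ j, e.repr (J (e k)) j • e j) = J (e k) := fun k => Module.Basis.sum_repr e (J (e k))
  -- gtinv in terms of ginv
  have hA : ∀ i j, (∑ k, (-(∑ l, ginv i l * e.repr (J (e l)) k)) * g (e k) (J (e j)))
      = (if i = j then (1:R) else 0) := by
    intro i j
    have inner : ∀ l : Fin m, (∑ k, e.repr (J (e l)) k * g (e k) (J (e j))) = -(g (e l) (e j)) := by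
      intro l
      have h := sum_hom_R (fun v => g v (J (e j))) (fun a b => hg_addl a b _)
        (fun c a => hg_smull c a _) (fun k => e.repr (J (e l)) k) (fun k => e k)
      rw [hrepr l] at h
      rw [← h, hNorden]
    calc (∑ k, (-(∑ l, ginv i l * e.repr (J (e l)) k)) * g (e k) (J (e j)))
        = ∑ k, ∑ l, -(ginv i l * (e.repr (J (e l)) k * g (e k) (J (e j)))) := by
          refine Finset.sum_congr rfl fun k _ => ?_
          rw [neg_mul, Finset.sum_mul, ← Finset.sum_neg_distrib]
          exact Finset.sum_congr rfl fun l _ => by ring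
      _ = ∑ l, ∑ k, -(ginv i l * (e.repr (J (e l)) k * g (e k) (J (e j)))) := Finset.sum_comm
      _ = ∑ l, -(ginv i l * (∑ k, e.repr (J (e l)) k * g (e k) (J (e j)))) := by
          refine Finset.sum_congr rfl fun l _ => ?_
          rw [Finset.mul_sum, ← Finset.sum_neg_distrib]
      _ = ∑ l, ginv i l * g (e l) (e j) := by
          refine Finset.sum_congr rfl fun l _ => ?_
          rw [inner l]; ring
      _ = _ := hginv i j
  have hgt : ∀ i j, gtinv i j = -(∑ k, ginv i k * e.repr (J (e k)) j) := by
    intro i j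
    symm
    calc -(∑ k, ginv i k * e.repr (J (e k)) j)
        = ∑ k, (-(∑ l, ginv i l * e.repr (J (e l)) k)) * (if k = j then (1:R) else 0) := by simp
      _ = ∑ k, (-(∑ l, ginv i l * e.repr (J (e l)) k)) * (∑ l, g (e k) (J (e l)) * gtinv l j) := by
          refine Finset.sum_congr rfl fun k _ => ?_
          rw [hgtinv2 k j]
      _ = ∑ k, ∑ l, ((-(∑ l', ginv i l' * e.repr (J (e l')) k)) * g (e k) (J (e l))) * gtinv l j := by
          refine Finset.sum_congr rfl fun k _ => ?_
          rw [Finset.mul_sum]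
          exact Finset.sum_congr rfl fun l _ => by ring
      _ = ∑ l, (∑ k, (-(∑ l', ginv i l' * e.repr (J (e l')) k)) * g (e k) (J (e l))) * gtinv l j := by
          rw [Finset.sum_comm]
          exact Finset.sum_congr rfl fun l _ => by rw [Finset.sum_mul]
      _ = ∑ l, (if i = l then (1:R) else 0) * gtinv l j := by
          refine Finset.sum_congr rfl fun l _ => ?_
          rw [hA i l]
      _ = gtinv i j := by simp
  -- trace conversion between the two inverse metrics
  have hTC : ∀ (C : Fin m → V → R), (∀ i a b, C i (a + b) = C i a + C i b) →
      (∀ i (c : R) a, C i (c • a) = c * C i a) →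
      (∑ i, ∑ j, gtinv i j * C i (e j)) = -(∑ i, ∑ j, ginv i j * C i (J (e j))) := by
    intro C hCa hCs
    calc (∑ i, ∑ j, gtinv i j * C i (e j))
        = ∑ i, ∑ j, ∑ k, -(ginv i k * (e.repr (J (e k)) j * C i (e j))) := by
          refine Finset.sum_congr rfl fun i _ => Finset.sum_congr rfl fun j _ => ?_
          rw [hgt i j, neg_mul, Finset.sum_mul, ← Finset.sum_neg_distrib]
          exact Finset.sum_congr rfl fun k _ => by ring
      _ = ∑ i, ∑ k, ∑ j, -(ginv i k * (e.repr (J (e k)) j * C i (e j))) := by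
          exact Finset.sum_congr rfl fun i _ => Finset.sum_comm
      _ = ∑ i, ∑ k, -(ginv i k * (∑ j, e.repr (J (e k)) j * C i (e j))) := by
          refine Finset.sum_congr rfl fun i _ => Finset.sum_congr rfl fun k _ => ?_
          rw [Finset.mul_sum, ← Finset.sum_neg_distrib]
      _ = ∑ i, ∑ k, -(ginv i k * C i (J (e k))) := by
          refine Finset.sum_congr rfl fun i _ => Finset.sum_congr rfl fun k _ => ?_
          have h := sum_hom_R (C i) (hCa i) (hCs i) (fun j => e.repr (J (e k)) j) (fun j => e j)
          rw [hrepr k] at h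
          rw [← h]
      _ = -(∑ i, ∑ k, ginv i k * C i (J (e k))) := by
          simp [Finset.sum_neg_distrib]
  have hTCl : ∀ (D : V → Fin m → R), (∀ j a b, D (a + b) j = D a j + D b j) →
      (∀ j (c : R) a, D (c • a) j = c * D a j) →
      (∑ i, ∑ j, gtinv i j * D (e i) j) = -(∑ i, ∑ j, ginv i j * D (J (e i)) j) := by
    intro D hDa hDs
    have h1 : (∑ i, ∑ j, gtinv i j * D (e i) j) = ∑ i, ∑ j, gtinv i j * D (e j) i := by
      rw [Finset.sum_comm]
      exact Finset.sum_congr rfl fun i _ => Finset.sum_congr rfl fun j _ => by rw [gtinv_sym]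
    rw [h1, hTC (fun i v => D v i) (fun i a b => hDa i a b) (fun i c a => hDs i c a), neg_inj,
      Finset.sum_comm]
    exact Finset.sum_congr rfl fun i _ => Finset.sum_congr rfl fun j _ => by rw [ginv_sym]
  -- trace of an endomorphism anticommuting with J vanishes
  have Tr0 : ∀ (B : V → V), (∀ a b, B (a + b) = B a + B b) → (∀ (c : R) a, B (c • a) = c • B a) →
      (∀ v, B (J v) = -(J (B v))) →
      (∑ i, ∑ j, ginv i j * g (B (e i)) (e j)) = 0 := by
    intro B hBa hBs hBJ
    have hAa : ∀ a b, J (B (a + b)) = J (B a) + J (B b) := by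
      intro a b; rw [hBa, hJ_add]
    have hAs : ∀ (c : R) a, J (B (c • a)) = c • J (B a) := by
      intro c a; rw [hBs, hJ_smul]
    have e1 : (∑ i, ∑ j, gtinv i j * g (J (B (e i))) (e j))
        = -(∑ i, ∑ j, ginv i j * g (J (B (e i))) (J (e j))) :=
      hTC (fun i v => g (J (B (e i))) v) (fun i a b => hg_addr _ a b)
        (fun i c a => hg_smulr c _ a)
    have e2 : (∑ i, ∑ j, gtinv i j * g (J (B (e i))) (e j))
        = -(∑ i, ∑ j, ginv i j * g (J (B (J (e i)))) (e j)) :=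
      hTCl (fun v j => g (J (B v)) (e j))
        (fun j a b => by
          show g (J (B (a + b))) (e j) = g (J (B a)) (e j) + g (J (B b)) (e j)
          rw [hAa a b, hg_addl])
        (fun j c a => by
          show g (J (B (c • a))) (e j) = c * g (J (B a)) (e j)
          rw [hAs c a, hg_smull])
    have r1 : ∀ i j : Fin m, g (J (B (e i))) (J (e j)) = -(g (B (e i)) (e j)) := by
      intro i j
      rw [hNorden]
    have r2 : ∀ i j : Fin m, g (J (B (J (e i)))) (e j) = g (B (e i)) (e j) := by
      intro i j
      rw [hBJ (e i), hJneg, hJJ, neg_neg]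
    have e1' : (∑ i, ∑ j, ginv i j * g (J (B (e i))) (J (e j)))
        = -(∑ i, ∑ j, ginv i j * g (B (e i)) (e j)) := by
      rw [← Finset.sum_neg_distrib]
      refine Finset.sum_congr rfl fun i _ => ?_
      rw [← Finset.sum_neg_distrib]
      refine Finset.sum_congr rfl fun j _ => ?_
      rw [r1 i j]; ring
    have e2' : (∑ i, ∑ j, ginv i j * g (J (B (J (e i)))) (e j))
        = (∑ i, ∑ j, ginv i j * g (B (e i)) (e j)) :=
      Finset.sum_congr rfl fun i _ => Finset.sum_congr rfl fun j _ => by rw [r2 i j]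
    have k1 : (∑ i, ∑ j, gtinv i j * g (J (B (e i))) (e j))
        = (∑ i, ∑ j, ginv i j * g (B (e i)) (e j)) := by
      rw [e1, e1', neg_neg]
    have k2 : (∑ i, ∑ j, gtinv i j * g (J (B (e i))) (e j))
        = -(∑ i, ∑ j, ginv i j * g (B (e i)) (e j)) := by
      rw [e2, e2']
    refine cancel2 _ _ ?_
    rw [mul_zero]
    linear_combination k2 - k1
  -- P-level algebraic lemmas
  have hP1neg : ∀ a y, nab (-a) (J y) - J (nab (-a) y) = -(nab a (J y) - J (nab a y)) := by
    intro a y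
    rw [hnab_negl, hnab_negl, hJneg]
    abel
  have hPJ : ∀ x v, nab x (J (J v)) - J (nab x (J v)) = -(J (nab x (J v) - J (nab x v))) := by
    intro x v
    rw [hJJ v, hnab_negr, hJsub, hJJ]
    abel
  -- trace of ∇J vanishes
  have tau0 : ∀ w, (∑ i, ∑ j, ginv i j * F w (e i) (e j)) = 0 := by
    intro w
    have hB := Tr0 (fun v => nab w (J v) - J (nab w v))
      (fun a b => by
        show nab w (J (a + b)) - J (nab w (a + b)) = _
        rw [hJ_add a b, hnab_addr w (J a) (J b), hnab_addr w a b, hJ_add (nab w a) (nab w b)]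
        abel)
      (fun c a => by
        show nab w (J (c • a)) - J (nab w (c • a)) = _
        rw [hJ_smul c a, hnab_leib c w (J a), hnab_leib c w a, hJ_add, hJ_smul, hJ_smul, smul_sub]
        abel)
      (fun v => hPJ w v)
    calc (∑ i, ∑ j, ginv i j * F w (e i) (e j))
        = ∑ i, ∑ j, ginv i j * g (nab w (J (e i)) - J (nab w (e i))) (e j) := by
          exact Finset.sum_congr rfl fun i _ => Finset.sum_congr rfl fun j _ => by rw [hF]
      _ = 0 := hB
  -- skew trace vanishes
  have SK : ∀ w, (∑ i, ∑ j, ginv i j * F w (e i) (J (e j))) = 0 := by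
    intro w
    have step1 : (∑ i, ∑ j, ginv i j * F w (e i) (J (e j)))
        = -(∑ i, ∑ j, ginv i j * F w (e j) (J (e i))) := by
      rw [← Finset.sum_neg_distrib]
      refine Finset.sum_congr rfl fun i _ => ?_
      rw [← Finset.sum_neg_distrib]
      refine Finset.sum_congr rfl fun j _ => ?_
      rw [hFJ3 w (e i) (e j)]
      ring
    have step2 : (∑ i, ∑ j, ginv i j * F w (e j) (J (e i)))
        = (∑ i, ∑ j, ginv i j * F w (e i) (J (e j))) := by
      rw [Finset.sum_comm]
      exact Finset.sum_congr rfl fun i _ => Finset.sum_congr rfl fun j _ => by rw [ginv_sym]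
    refine cancel2 _ _ ?_
    rw [mul_zero]
    linear_combination step1 - step2
  -- the key lemma: trace of F with J in the first slot
  have KB : ∀ z, (∑ i, ∑ j, ginv i j * F (J (e j)) (e i) z)
      = -(∑ i, ∑ j, ginv i j * F (e i) (e j) (J z)) := by
    intro z
    have hNtJ : ∀ x, (nab (J (J x)) (J z) - J (nab (J (J x)) z))
          - (nab (J z) (J (J x)) - J (nab (J z) (J x)))
          - J (nab (J x) (J z) - J (nab (J x) z)) + J (nab z (J (J x)) - J (nab z (J x)))
        = -(J ((nab (J x) (J z) - J (nab (J x) z)) - (nab (J z) (J x) - J (nab (J z) x))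
            - J (nab x (J z) - J (nab x z)) + J (nab z (J x) - J (nab z x)))) := by
      intro x
      simp only [hJJ, hJsub, hJ_add, hJneg, hnab_negl, hnab_negr]
      abel
    have h0 := Tr0 (fun x => (nab (J x) (J z) - J (nab (J x) z))
          - (nab (J z) (J x) - J (nab (J z) x))
          - J (nab x (J z) - J (nab x z)) + J (nab z (J x) - J (nab z x)))
      (fun a b => by
        show (nab (J (a + b)) (J z) - J (nab (J (a + b)) z)) - _ - _ + _ = _
        simp only [hJ_add, hnab_addl, hnab_addr, hJsub]
        abel)
      (fun c a => by
        show (nab (J (c • a)) (J z) - J (nab (J (c • a)) z)) - _ - _ + _ = _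
        simp only [hJ_smul, hnab_smull, hnab_leib, hJ_add, hJsub, smul_add, smul_sub]
        abel)
      hNtJ
    have hsplit : (∑ i, ∑ j, ginv i j * g ((nab (J (e i)) (J z) - J (nab (J (e i)) z))
          - (nab (J z) (J (e i)) - J (nab (J z) (e i)))
          - J (nab (e i) (J z) - J (nab (e i) z)) + J (nab z (J (e i)) - J (nab z (e i)))) (e j))
        = (∑ i, ∑ j, ginv i j * F (J (e i)) z (e j))
          - (∑ i, ∑ j, ginv i j * F (J z) (e i) (e j))
          - (∑ i, ∑ j, ginv i j * F (e i) z (J (e j)))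
          + (∑ i, ∑ j, ginv i j * F z (e i) (J (e j))) := by
      have point : ∀ i j : Fin m, g ((nab (J (e i)) (J z) - J (nab (J (e i)) z))
            - (nab (J z) (J (e i)) - J (nab (J z) (e i)))
            - J (nab (e i) (J z) - J (nab (e i) z)) + J (nab z (J (e i)) - J (nab z (e i)))) (e j)
          = F (J (e i)) z (e j) - F (J z) (e i) (e j) - F (e i) z (J (e j))
            + F z (e i) (J (e j)) := by
        intro i j
        rw [hg_addl, hg_subl, hg_subl, hgJ (nab (e i) (J z) - J (nab (e i) z)) (e j),
          hgJ (nab z (J (e i)) - J (nab z (e i))) (e j),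
          ← hF (J (e i)) z (e j), ← hF (J z) (e i) (e j), ← hF (e i) z (J (e j)),
          ← hF z (e i) (J (e j))]
      calc _ = ∑ i, ∑ j, (ginv i j * F (J (e i)) z (e j) - ginv i j * F (J z) (e i) (e j)
            - ginv i j * F (e i) z (J (e j)) + ginv i j * F z (e i) (J (e j))) := by
            refine Finset.sum_congr rfl fun i _ => Finset.sum_congr rfl fun j _ => ?_
            rw [point i j]
            ring
        _ = _ := by
            simp only [Finset.sum_add_distrib, Finset.sum_sub_distrib]
    have h0' : (∑ i, ∑ j, ginv i j * F (J (e i)) z (e j))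
          - (∑ i, ∑ j, ginv i j * F (J z) (e i) (e j))
          - (∑ i, ∑ j, ginv i j * F (e i) z (J (e j)))
          + (∑ i, ∑ j, ginv i j * F z (e i) (J (e j))) = 0 := by
      rw [← hsplit]
      exact h0
    have S1eq : (∑ i, ∑ j, ginv i j * F (J (e i)) z (e j))
        = (∑ i, ∑ j, ginv i j * F (J (e j)) (e i) z) := by
      calc (∑ i, ∑ j, ginv i j * F (J (e i)) z (e j))
          = ∑ i, ∑ j, ginv i j * F (J (e i)) (e j) z := by
            exact Finset.sum_congr rfl fun i _ => Finset.sum_congr rfl fun j _ => by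
              rw [hFsym (J (e i)) z (e j)]
        _ = ∑ i, ∑ j, ginv i j * F (J (e j)) (e i) z := by
            rw [Finset.sum_comm]
            exact Finset.sum_congr rfl fun i _ => Finset.sum_congr rfl fun j _ => by
              rw [ginv_sym]
    have S3eq : (∑ i, ∑ j, ginv i j * F (e i) z (J (e j)))
        = -(∑ i, ∑ j, ginv i j * F (e i) (e j) (J z)) := by
      rw [← Finset.sum_neg_distrib]
      refine Finset.sum_congr rfl fun i _ => ?_
      rw [← Finset.sum_neg_distrib]
      refine Finset.sum_congr rfl fun j _ => ?_
      rw [hFsym (e i) z (J (e j)), hFJ2 (e i) (e j) z]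
      ring
    linear_combination h0' - S1eq + S3eq + tau0 (J z) - SK z
  -- generic trace evaluations
  have Esym : ∀ w, (∑ i, ∑ j, ginv i j * F (e j) (e i) w)
      = (∑ i, ∑ j, ginv i j * F (e i) (e j) w) := by
    intro w
    rw [Finset.sum_comm]
    exact Finset.sum_congr rfl fun i _ => Finset.sum_congr rfl fun j _ => by rw [ginv_sym]
  have Esym3 : ∀ w, (∑ i, ∑ j, ginv i j * F (e i) w (e j))
      = (∑ i, ∑ j, ginv i j * F (e i) (e j) w) :=
    fun w => Finset.sum_congr rfl fun i _ => Finset.sum_congr rfl fun j _ => by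
      rw [hFsym (e i) w (e j)]
  have tau0' : ∀ w, (∑ i, ∑ j, ginv i j * F w (e j) (e i)) = 0 := by
    intro w
    rw [Finset.sum_comm]
    exact (Finset.sum_congr rfl fun i _ => Finset.sum_congr rfl fun j _ => by
      rw [ginv_sym]).trans (tau0 w)
  have SK' : ∀ w, (∑ i, ∑ j, ginv i j * F w (J (e j)) (e i)) = 0 := by
    intro w
    exact (Finset.sum_congr rfl fun i _ => Finset.sum_congr rfl fun j _ => by
      rw [hFsym w (J (e j)) (e i)]).trans (SK w)
  have S3eq : ∀ z, (∑ i, ∑ j, ginv i j * F (e i) z (J (e j)))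
      = -(∑ i, ∑ j, ginv i j * F (e i) (e j) (J z)) := by
    intro z
    rw [← Finset.sum_neg_distrib]
    refine Finset.sum_congr rfl fun i _ => ?_
    rw [← Finset.sum_neg_distrib]
    refine Finset.sum_congr rfl fun j _ => ?_
    rw [hFsym (e i) z (J (e j)), hFJ2 (e i) (e j) z]
    ring
  have KB' : ∀ z, (∑ i, ∑ j, ginv i j * F (J (e j)) (e i) (J z))
      = (∑ i, ∑ j, ginv i j * F (e i) (e j) z) := by
    intro z
    have p : (∑ i, ∑ j, ginv i j * F (e i) (e j) (J (J z)))
        = -(∑ i, ∑ j, ginv i j * F (e i) (e j) z) := by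
      rw [← Finset.sum_neg_distrib]
      refine Finset.sum_congr rfl fun i _ => ?_
      rw [← Finset.sum_neg_distrib]
      refine Finset.sum_congr rfl fun j _ => ?_
      rw [hJJ z, hFneg3]
      ring
    rw [KB (J z), p, neg_neg]
  have thetas_eq : ∀ z, thetas z = -(∑ i, ∑ j, ginv i j * F (e i) (e j) (J z)) := by
    intro z
    rw [hthetas, ← Finset.sum_neg_distrib]
    refine Finset.sum_congr rfl fun i _ => ?_
    rw [← Finset.sum_neg_distrib]
    refine Finset.sum_congr rfl fun j _ => ?_
    rw [hFJ2 (e i) (e j) z]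
    ring
  -- convert twin traces to g-traces
  have thetat_eq : ∀ z, thetat z = -(∑ i, ∑ j, ginv i j * Ft (e i) (J (e j)) z) := by
    intro z
    rw [hthetat]
    exact hTC (fun i v => Ft (e i) v z) (fun i a b => hFt2add (e i) a b z)
      (fun i c a => hFt2smul (e i) c a z)
  have thetats_eq : ∀ z, thetats z = (∑ i, ∑ j, ginv i j * Ft (e i) (e j) z) := by
    intro z
    rw [hthetats]
    have h := hTC (fun i v => Ft (e i) (J v) z)
      (fun i a b => by
        show Ft (e i) (J (a + b)) z = Ft (e i) (J a) z + Ft (e i) (J b) z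
        rw [hJ_add]; exact hFt2add (e i) (J a) (J b) z)
      (fun i c a => by
        show Ft (e i) (J (c • a)) z = c * Ft (e i) (J a) z
        rw [hJ_smul]; exact hFt2smul (e i) c (J a) z)
    rw [h]
    have p : (∑ i, ∑ j, ginv i j * Ft (e i) (J (J (e j))) z)
        = -(∑ i, ∑ j, ginv i j * Ft (e i) (e j) z) := by
      rw [← Finset.sum_neg_distrib]
      refine Finset.sum_congr rfl fun i _ => ?_
      rw [← Finset.sum_neg_distrib]
      refine Finset.sum_congr rfl fun j _ => ?_
      rw [hJJ (e j), hFt2neg]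
      ring
    rw [p, neg_neg]
  -- second claim: thetats = thetas
  have main2 : ∀ z, thetats z = thetas z := by
    intro z
    refine cancel2 _ _ ?_
    rw [thetats_eq z, thetas_eq z]
    have expand : (2:R) * (∑ i, ∑ j, ginv i j * Ft (e i) (e j) z)
        = 2 * (∑ i, ∑ j, ginv i j * F (e i) (e j) (J z))
          + (∑ i, ∑ j, ginv i j * F (e i) z (J (e j)))
          + (∑ i, ∑ j, ginv i j * F (J (e j)) (e i) z)
          - (∑ i, ∑ j, ginv i j * F z (J (e j)) (e i))
          - (∑ i, ∑ j, ginv i j * F (e i) (J z) (e j))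
          - (∑ i, ∑ j, ginv i j * F (e j) (e i) (J z))
          + (∑ i, ∑ j, ginv i j * F (J z) (e j) (e i)) := by
      calc (2:R) * (∑ i, ∑ j, ginv i j * Ft (e i) (e j) z)
          = ∑ i, ∑ j, (2 * (ginv i j * F (e i) (e j) (J z))
              + ginv i j * F (e i) z (J (e j)) + ginv i j * F (J (e j)) (e i) z
              - ginv i j * F z (J (e j)) (e i) - ginv i j * F (e i) (J z) (e j)
              - ginv i j * F (e j) (e i) (J z) + ginv i j * F (J z) (e j) (e i)) := by
            rw [Finset.mul_sum]
            refine Finset.sum_congr rfl fun i _ => ?_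
            rw [Finset.mul_sum]
            refine Finset.sum_congr rfl fun j _ => ?_
            calc 2 * (ginv i j * Ft (e i) (e j) z)
                = ginv i j * (2 * Ft (e i) (e j) z) := by ring
              _ = _ := by rw [h2Ft (e i) (e j) z]; ring
        _ = _ := by
            simp only [Finset.sum_add_distrib, Finset.sum_sub_distrib, ← Finset.mul_sum]
    rw [expand, S3eq z, KB z, SK' z, Esym3 (J z), Esym (J z), tau0' (J z)]
    ring
  -- first claim: thetat = theta
  have main1 : ∀ z, thetat z = theta z := by
    intro z
    refine cancel2 _ _ ?_
    rw [thetat_eq z, htheta z]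
    have expand : (2:R) * (∑ i, ∑ j, ginv i j * Ft (e i) (J (e j)) z)
        = 2 * (∑ i, ∑ j, ginv i j * F (e i) (J (e j)) (J z))
          + (∑ i, ∑ j, ginv i j * F (e i) z (J (J (e j))))
          + (∑ i, ∑ j, ginv i j * F (J (J (e j))) (e i) z)
          - (∑ i, ∑ j, ginv i j * F z (J (J (e j))) (e i))
          - (∑ i, ∑ j, ginv i j * F (e i) (J z) (J (e j)))
          - (∑ i, ∑ j, ginv i j * F (J (e j)) (e i) (J z))
          + (∑ i, ∑ j, ginv i j * F (J z) (J (e j)) (e i)) := by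
      calc (2:R) * (∑ i, ∑ j, ginv i j * Ft (e i) (J (e j)) z)
          = ∑ i, ∑ j, (2 * (ginv i j * F (e i) (J (e j)) (J z))
              + ginv i j * F (e i) z (J (J (e j))) + ginv i j * F (J (J (e j))) (e i) z
              - ginv i j * F z (J (J (e j))) (e i) - ginv i j * F (e i) (J z) (J (e j))
              - ginv i j * F (J (e j)) (e i) (J z) + ginv i j * F (J z) (J (e j)) (e i)) := by
            rw [Finset.mul_sum]
            refine Finset.sum_congr rfl fun i _ => ?_
            rw [Finset.mul_sum]
            refine Finset.sum_congr rfl fun j _ => ?_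
            calc 2 * (ginv i j * Ft (e i) (J (e j)) z)
                = ginv i j * (2 * Ft (e i) (J (e j)) z) := by ring
              _ = _ := by rw [h2Ft (e i) (J (e j)) z]; ring
        _ = _ := by
            simp only [Finset.sum_add_distrib, Finset.sum_sub_distrib, ← Finset.mul_sum]
    have U1 : (∑ i, ∑ j, ginv i j * F (e i) (J (e j)) (J z))
        = (∑ i, ∑ j, ginv i j * F (e i) (e j) z) :=
      Finset.sum_congr rfl fun i _ => Finset.sum_congr rfl fun j _ => by
        rw [hFJJ (e i) (e j) z]
    have U2 : (∑ i, ∑ j, ginv i j * F (e i) z (J (J (e j))))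
        = -(∑ i, ∑ j, ginv i j * F (e i) z (e j)) := by
      rw [← Finset.sum_neg_distrib]
      refine Finset.sum_congr rfl fun i _ => ?_
      rw [← Finset.sum_neg_distrib]
      refine Finset.sum_congr rfl fun j _ => ?_
      rw [hJJ (e j), hFneg3]
      ring
    have U3 : (∑ i, ∑ j, ginv i j * F (J (J (e j))) (e i) z)
        = -(∑ i, ∑ j, ginv i j * F (e j) (e i) z) := by
      rw [← Finset.sum_neg_distrib]
      refine Finset.sum_congr rfl fun i _ => ?_
      rw [← Finset.sum_neg_distrib]
      refine Finset.sum_congr rfl fun j _ => ?_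
      rw [hJJ (e j), hFneg1]
      ring
    have U4 : (∑ i, ∑ j, ginv i j * F z (J (J (e j))) (e i))
        = -(∑ i, ∑ j, ginv i j * F z (e j) (e i)) := by
      rw [← Finset.sum_neg_distrib]
      refine Finset.sum_congr rfl fun i _ => ?_
      rw [← Finset.sum_neg_distrib]
      refine Finset.sum_congr rfl fun j _ => ?_
      rw [hJJ (e j), hFneg2]
      ring
    have U5 : (∑ i, ∑ j, ginv i j * F (e i) (J z) (J (e j)))
        = (∑ i, ∑ j, ginv i j * F (e i) (e j) z) :=
      Finset.sum_congr rfl fun i _ => Finset.sum_congr rfl fun j _ => by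
        rw [hFsym (e i) (J z) (J (e j)), hFJJ (e i) (e j) z]
    have final : (2:R) * (∑ i, ∑ j, ginv i j * Ft (e i) (J (e j)) z)
        = -(2 * (∑ i, ∑ j, ginv i j * F (e i) (e j) z)) := by
      rw [expand, U1, U2, U3, U4, U5, KB' z, SK' (J z), Esym3 z, Esym z, tau0' z]
      ring
    linear_combination -final
  exact ⟨main1, main2⟩
end

section
/- On an almost Norden manifold, the Nijenhuis tensor N of J is invariant under the twin interchange and the associated Nijenhuis tensor S is anti-invariant: Ñ(x,y) = N(x,y) and S̃(x,y) = -S(x,y). -/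
/-- The Nijenhuis tensor N is invariant and the associated Nijenhuis tensor S is
anti-invariant under the twin interchange: Ñ = N, S̃ = -S. -/
theorem nijenhuis_tensors_twin
    (R : Type*) [CommRing R] [Algebra ℝ R]
    (V : Type*) [AddCommGroup V] [Module R V] [Module ℝ V] [IsScalarTower ℝ R V]
    [LieRing V]
    (Dop : V → R → R) (g : V → V → R) (J : V → V) (nab : V → V → V)
    (hg_symm : ∀ x y, g x y = g y x)
    (hg_addl : ∀ x x' y, g (x + x') y = g x y + g x' y)
    (hg_smull : ∀ (f : R) x y, g (f • x) y = f * g x y)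
    (hg_nd : ∀ x, (∀ y, g x y = 0) → x = 0)
    (hJ_add : ∀ x y, J (x + y) = J x + J y)
    (hJ_smul : ∀ (f : R) x, J (f • x) = f • J x)
    (hJJ : ∀ x, J (J x) = -x)
    (hNorden : ∀ x y, g (J x) (J y) = -(g x y))
    (hD_add : ∀ x a b, Dop x (a + b) = Dop x a + Dop x b)
    (hD_mul : ∀ x a b, Dop x (a * b) = Dop x a * b + a * Dop x b)
    (hnab_addl : ∀ x x' y, nab (x + x') y = nab x y + nab x' y)
    (hnab_smull : ∀ (f : R) x y, nab (f • x) y = f • nab x y)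
    (hnab_addr : ∀ x y y', nab x (y + y') = nab x y + nab x y')
    (hnab_leib : ∀ (f : R) x y, nab x (f • y) = Dop x f • y + f • nab x y)
    (hTF : ∀ x y, nab x y - nab y x = ⁅x, y⁆)
    (hMC : ∀ x y z, Dop x (g y z) = g (nab x y) z + g y (nab x z))
    (nab' : V → V → V)
    (hnab'_addl : ∀ x x' y, nab' (x + x') y = nab' x y + nab' x' y)
    (hnab'_smull : ∀ (f : R) x y, nab' (f • x) y = f • nab' x y)
    (hnab'_addr : ∀ x y y', nab' x (y + y') = nab' x y + nab' x y')
    (hnab'_leib : ∀ (f : R) x y, nab' x (f • y) = Dop x f • y + f • nab' x y)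
    (hTF' : ∀ x y, nab' x y - nab' y x = ⁅x, y⁆)
    (hMC' : ∀ x y z, Dop x (g y (J z)) = g (nab' x y) (J z) + g y (J (nab' x z)))
    (N Nt S St : V → V → V)
    (hN : ∀ x y, N x y = ⁅J x, J y⁆ - ⁅x, y⁆ - J ⁅J x, y⁆ - J ⁅x, J y⁆)
    (hNt : ∀ x y, Nt x y =
      (nab' (J x) (J y) - nab' (J y) (J x)) - (nab' x y - nab' y x)
        - J (nab' (J x) y - nab' y (J x)) - J (nab' x (J y) - nab' (J y) x))
    (hS : ∀ x y, S x y =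
      (nab (J x) (J y) + nab (J y) (J x)) - (nab x y + nab y x)
        - J (nab (J x) y + nab y (J x)) - J (nab x (J y) + nab (J y) x))
    (hSt : ∀ x y, St x y =
      (nab' (J x) (J y) + nab' (J y) (J x)) - (nab' x y + nab' y x)
        - J (nab' (J x) y + nab' y (J x)) - J (nab' x (J y) + nab' (J y) x)) :
    (∀ x y, Nt x y = N x y) ∧ (∀ x y, St x y = -(S x y)) := by
  -- basic linearity facts
  have g1add : ∀ x y z : V, g (x + y) z = g x z + g y z := hg_addl
  have g1neg : ∀ x y : V, g (-x) y = -g x y := fun x y => by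
    have h := hg_smull (-1 : R) x y; rwa [neg_one_smul, neg_one_mul] at h
  have g2neg : ∀ x y : V, g x (-y) = -g x y := fun x y => by
    rw [hg_symm, g1neg, hg_symm]
  have g1sub : ∀ x y z : V, g (x - y) z = g x z - g y z := fun x y z => by
    rw [sub_eq_add_neg, g1add, g1neg, sub_eq_add_neg]
  have Jneg : ∀ x : V, J (-x) = -J x := fun x => by
    have h := hJ_smul (-1 : R) x; rwa [neg_one_smul, neg_one_smul] at h
  have Jsub : ∀ x y : V, J (x - y) = J x - J y := fun x y => by
    rw [sub_eq_add_neg, hJ_add, Jneg, sub_eq_add_neg]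
  have nabneg : ∀ x y : V, nab x (-y) = -nab x y := fun x y => by
    have h0 : nab x 0 = 0 := by have := hnab_addr x 0 0; simpa using this
    have h := hnab_addr x y (-y)
    rw [add_neg_cancel, h0] at h
    exact eq_neg_of_add_eq_zero_right h.symm
  have gJ : ∀ x y : V, g (J x) y = g x (J y) := fun x y => by
    have h := hNorden x (J y)
    rw [hJJ, g2neg] at h
    exact neg_injective h
  constructor
  · intro x y
    rw [hNt, hN, hTF' (J x) (J y), hTF' x y, hTF' (J x) y, hTF' x (J y)]
  -- the difference tensor and the fundamental tensor φ
  obtain ⟨φ, hφ⟩ : ∃ φ : V → V → V → R,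
      ∀ a b c, φ a b c = g (nab a (J b) - J (nab a b)) c := ⟨_, fun _ _ _ => rfl⟩
  obtain ⟨T, hT⟩ : ∃ T : V → V → V → R,
      ∀ a b c, T a b c = g (nab' a b - nab a b) (J c) := ⟨_, fun _ _ _ => rfl⟩
  have Psym : ∀ a b : V, nab' a b - nab a b = nab' b a - nab b a := fun a b => by
    have h : (nab' a b - nab' b a) - (nab a b - nab b a) = 0 := by
      rw [hTF', hTF, sub_self]
    have h2 : (nab' a b - nab a b) - (nab' b a - nab b a)
        = (nab' a b - nab' b a) - (nab a b - nab b a) := by abel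
    rw [h] at h2
    exact sub_eq_zero.mp h2
  have Tsymm : ∀ a b c, T a b c = T b a c := fun a b c => by
    rw [hT, hT, Psym a b]
  have phi2neg : ∀ a b c, φ a b (-c) = -φ a b c := fun a b c => by
    rw [hφ, hφ, g2neg]
  have phi_sym : ∀ a b c, φ a b c = φ a c b := fun a b c => by
    have key : g (nab a (J b)) c + g (J b) (nab a c)
        = g (nab a b) (J c) + g b (nab a (J c)) :=
      (hMC a (J b) c).symm.trans ((congrArg (Dop a) (gJ b c)).trans (hMC a b (J c)))
    simp only [hφ, g1sub]
    linear_combination key - gJ (nab a b) c + gJ (nab a c) b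
      - hg_symm (J b) (nab a c) + hg_symm b (nab a (J c))
  have phi_slide : ∀ a b c, φ a (J b) c = -φ a b (J c) := fun a b c => by
    simp only [hφ, hJJ, nabneg, g1sub, g1neg, g2neg, hNorden, gJ]
    ring
  have phi_J2 : ∀ a b c, φ a (J b) (J c) = φ a b c := fun a b c => by
    rw [phi_slide, hJJ, phi2neg, neg_neg]
  have Tsum : ∀ a b c, T a b c + T a c b = φ a b c := fun a b c => by
    have key2 : g (nab' a b) (J c) + g b (J (nab' a c))
        = g (nab a b) (J c) + g b (nab a (J c)) :=
      (hMC' a b c).symm.trans (hMC a b (J c))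
    have h1 : T a b c + T a c b = φ a c b := by
      simp only [hT, hφ, g1sub]
      linear_combination key2 - hg_symm b (J (nab' a c)) - gJ (nab' a c) b
        + hg_symm b (nab a (J c)) + gJ (nab a c) b
    rw [h1, phi_sym]
  have twoT : ∀ a b c, T a b c + T a b c = φ a b c + φ b a c - φ c a b :=
    fun a b c => by
      linear_combination Tsum a b c + Tsum b a c - Tsum c a b
        + Tsymm a b c - Tsymm a c b - Tsymm b c a
  have gS : ∀ a b c, g (S a b) (J c)
      = φ (J a) b (J c) + φ (J b) a (J c) + φ a b c + φ b a c := fun a b c => by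
    rw [hS]
    simp only [hφ, hJ_add, g1sub, g1add, hJJ, hNorden, gJ, g1neg, g2neg]
    ring
  have gStS : ∀ a b c, g (St a b) (J c) - g (S a b) (J c)
      = T (J a) (J b) c + T (J b) (J a) c - T a b c - T b a c
        - T (J a) b (J c) - T b (J a) (J c) - T a (J b) (J c) - T (J b) a (J c) :=
    fun a b c => by
      rw [hSt, hS]
      simp only [hT, hJ_add, g1sub, g1add, hJJ, hNorden, gJ, g1neg, g2neg]
      ring
  intro x y
  have key : ∀ z, g (St x y) (J z) + g (S x y) (J z) = 0 := fun z => by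
    linear_combination gStS x y z + 2 * gS x y z
      + twoT (J x) (J y) z - twoT x y z - twoT (J x) y (J z) - twoT x (J y) (J z)
      + Tsymm (J y) (J x) z - Tsymm y x z - Tsymm y (J x) (J z) - Tsymm (J y) x (J z)
      + phi_slide (J x) y z + phi_slide (J y) x z - phi_J2 z x y
      - phi_J2 y x z - phi_J2 x y z + phi_slide (J z) x y
  have final : ∀ w, g (St x y + S x y) w = 0 := fun w => by
    have hw : J (-(J w)) = w := by rw [Jneg, hJJ, neg_neg]
    have h := key (-(J w))
    rw [hw] at h
    rw [g1add]
    exact h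
  have h0 : St x y + S x y = 0 := hg_nd _ final
  exact eq_neg_of_add_eq_zero_left h0
end

section
/- The tensor Q(x,y)z = (∇_x Φ)(y,z) - (∇_y Φ)(x,z) + Φ(x,Φ(y,z)) - Φ(y,Φ(x,z)), which satisfies R̃(x,y)z = R(x,y)z + Q(x,y)z, is anti-invariant under the twin interchange: Q̃(x,y)z = -Q(x,y)z. -/
/-- The tensor Q(x,y)z = (∇ₓΦ)(y,z) - (∇ᵧΦ)(x,z) + Φ(x,Φ(y,z)) - Φ(y,Φ(x,z)) satisfies
R̃ = R + Q and is anti-invariant under the twin interchange: Q̃ = -Q. -/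
theorem tensor_Q_anti_invariant
    (R : Type*) [CommRing R] [Algebra ℝ R]
    (V : Type*) [AddCommGroup V] [Module R V] [Module ℝ V] [IsScalarTower ℝ R V]
    [LieRing V]
    (Dop : V → R → R) (g : V → V → R) (J : V → V) (nab : V → V → V)
    (hg_symm : ∀ x y, g x y = g y x)
    (hg_addl : ∀ x x' y, g (x + x') y = g x y + g x' y)
    (hg_smull : ∀ (f : R) x y, g (f • x) y = f * g x y)
    (hg_nd : ∀ x, (∀ y, g x y = 0) → x = 0)
    (hJ_add : ∀ x y, J (x + y) = J x + J y)
    (hJ_smul : ∀ (f : R) x, J (f • x) = f • J x)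
    (hJJ : ∀ x, J (J x) = -x)
    (hNorden : ∀ x y, g (J x) (J y) = -(g x y))
    (hD_add : ∀ x a b, Dop x (a + b) = Dop x a + Dop x b)
    (hD_mul : ∀ x a b, Dop x (a * b) = Dop x a * b + a * Dop x b)
    (hnab_addl : ∀ x x' y, nab (x + x') y = nab x y + nab x' y)
    (hnab_smull : ∀ (f : R) x y, nab (f • x) y = f • nab x y)
    (hnab_addr : ∀ x y y', nab x (y + y') = nab x y + nab x y')
    (hnab_leib : ∀ (f : R) x y, nab x (f • y) = Dop x f • y + f • nab x y)
    (hTF : ∀ x y, nab x y - nab y x = ⁅x, y⁆)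
    (hMC : ∀ x y z, Dop x (g y z) = g (nab x y) z + g y (nab x z))
    (nab' : V → V → V)
    (hnab'_addl : ∀ x x' y, nab' (x + x') y = nab' x y + nab' x' y)
    (hnab'_smull : ∀ (f : R) x y, nab' (f • x) y = f • nab' x y)
    (hnab'_addr : ∀ x y y', nab' x (y + y') = nab' x y + nab' x y')
    (hnab'_leib : ∀ (f : R) x y, nab' x (f • y) = Dop x f • y + f • nab' x y)
    (hTF' : ∀ x y, nab' x y - nab' y x = ⁅x, y⁆)
    (hMC' : ∀ x y z, Dop x (g y (J z)) = g (nab' x y) (J z) + g y (J (nab' x z)))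
    (Phi : V → V → V) (hPhi : ∀ x y, Phi x y = nab' x y - nab x y)
    (Phit : V → V → V) (hPhit : ∀ x y, Phit x y = -(Phi x y))
    (cd cdt : V → V → V → V) (Q Qt : V → V → V → V)
    (hcd : ∀ x y z, cd x y z = nab x (Phi y z) - Phi (nab x y) z - Phi y (nab x z))
    (hcdt : ∀ x y z, cdt x y z = nab' x (Phit y z) - Phit (nab' x y) z - Phit y (nab' x z))
    (hQ : ∀ x y z, Q x y z = cd x y z - cd y x z + Phi x (Phi y z) - Phi y (Phi x z))
    (hQt : ∀ x y z, Qt x y z = cdt x y z - cdt y x z + Phit x (Phit y z) - Phit y (Phit x z))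
    (Rc Rc' : V → V → V → V)
    (hRc : ∀ x y z, Rc x y z = nab x (nab y z) - nab y (nab x z) - nab ⁅x, y⁆ z)
    (hRc' : ∀ x y z, Rc' x y z = nab' x (nab' y z) - nab' y (nab' x z) - nab' ⁅x, y⁆ z)
 :
    (∀ x y z, Rc' x y z = Rc x y z + Q x y z) ∧
    (∀ x y z, Qt x y z = -(Q x y z)) := by
  -- nab' = nab + Phi
  have hnab'_eq : ∀ x y, nab' x y = nab x y + Phi x y := by
    intro x y; rw [hPhi]; abel
  -- Phi is symmetric
  have hPhi_symm : ∀ x y, Phi x y = Phi y x := by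
    intro x y
    have h : nab' x y - nab' y x = nab x y - nab y x := (hTF' x y).trans (hTF x y).symm
    rw [hPhi, hPhi]
    exact sub_eq_sub_iff_sub_eq_sub.mp h
  -- additivity of Phi in each argument
  have hPadd_r : ∀ x a b, Phi x (a + b) = Phi x a + Phi x b := by
    intro x a b; simp only [hPhi, hnab_addr, hnab'_addr]; abel
  have hPadd_l : ∀ a b z, Phi (a + b) z = Phi a z + Phi b z := by
    intro a b z; simp only [hPhi, hnab_addl, hnab'_addl]; abel
  -- neg in first argument of nab, nab', Phi
  have hnegl : ∀ a y, nab (-a) y = -(nab a y) := by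
    intro a y
    have h := hnab_smull (-1 : R) a y
    simpa using h
  have hnegl' : ∀ a y, nab' (-a) y = -(nab' a y) := by
    intro a y
    have h := hnab'_smull (-1 : R) a y
    simpa using h
  have hPneg_l : ∀ a z, Phi (-a) z = -(Phi a z) := by
    intro a z; simp only [hPhi, hnegl, hnegl']; abel
  -- neg in second argument
  have hn0 : ∀ x, nab x (0 : V) = 0 := by
    intro x; have h := hnab_addr x 0 0; simp at h; exact h
  have hn0' : ∀ x, nab' x (0 : V) = 0 := by
    intro x; have h := hnab'_addr x 0 0; simp at h; exact h
  have hnegr : ∀ x a, nab x (-a) = -(nab x a) := by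
    intro x a
    have h : nab x a + nab x (-a) = 0 := by rw [← hnab_addr]; simp [hn0]
    exact (neg_eq_of_add_eq_zero_right h).symm
  have hnegr' : ∀ x a, nab' x (-a) = -(nab' x a) := by
    intro x a
    have h : nab' x a + nab' x (-a) = 0 := by rw [← hnab'_addr]; simp [hn0']
    exact (neg_eq_of_add_eq_zero_right h).symm
  have hPneg_r : ∀ x a, Phi x (-a) = -(Phi x a) := by
    intro x a; simp only [hPhi, hnegr, hnegr']; abel
  -- Phi on the bracket
  have hPhiBr : ∀ x y z, Phi ⁅x, y⁆ z = Phi (nab x y) z - Phi (nab y x) z := by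
    intro x y z
    have h : (⁅x, y⁆ : V) = nab x y + -(nab y x) := by
      rw [← hTF x y]; abel
    rw [h, hPadd_l, hPneg_l]; abel
  constructor
  · intro x y z
    simp only [hRc', hRc, hQ, hcd, hnab'_eq, hnab_addr, hPadd_r, hPhiBr]
    abel
  · intro x y z
    simp only [hQt, hcdt, hPhit, hQ, hcd, hnab'_eq, hnab_addr, hnegr, hPadd_r,
      hPneg_r, hPadd_l, hPneg_l]
    rw [hPhi_symm x y]
    abel
end

section
/- The curvature tensor K of the average connection D = ½(∇ + ∇̃) satisfies K(x,y)z = R(x,y)z + ½Q(x,y)z - ¼A(x,y)z, and K is invariant under the twin interchange: K̃ = K. -/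
/-- The curvature K of the average connection D = ½(∇+∇̃) satisfies
K = R + ½Q - ¼A and is invariant under the twin interchange: K̃ = K. -/
theorem average_curvature_invariant
    (R : Type*) [CommRing R] [Algebra ℝ R]
    (V : Type*) [AddCommGroup V] [Module R V] [Module ℝ V] [IsScalarTower ℝ R V]
    [LieRing V]
    (Dop : V → R → R) (g : V → V → R) (J : V → V) (nab : V → V → V)
    (hg_symm : ∀ x y, g x y = g y x)
    (hg_addl : ∀ x x' y, g (x + x') y = g x y + g x' y)
    (hg_smull : ∀ (f : R) x y, g (f • x) y = f * g x y)
    (hg_nd : ∀ x, (∀ y, g x y = 0) → x = 0)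
    (hJ_add : ∀ x y, J (x + y) = J x + J y)
    (hJ_smul : ∀ (f : R) x, J (f • x) = f • J x)
    (hJJ : ∀ x, J (J x) = -x)
    (hNorden : ∀ x y, g (J x) (J y) = -(g x y))
    (hD_add : ∀ x a b, Dop x (a + b) = Dop x a + Dop x b)
    (hD_mul : ∀ x a b, Dop x (a * b) = Dop x a * b + a * Dop x b)
    (hnab_addl : ∀ x x' y, nab (x + x') y = nab x y + nab x' y)
    (hnab_smull : ∀ (f : R) x y, nab (f • x) y = f • nab x y)
    (hnab_addr : ∀ x y y', nab x (y + y') = nab x y + nab x y')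
    (hnab_leib : ∀ (f : R) x y, nab x (f • y) = Dop x f • y + f • nab x y)
    (hTF : ∀ x y, nab x y - nab y x = ⁅x, y⁆)
    (hMC : ∀ x y z, Dop x (g y z) = g (nab x y) z + g y (nab x z))
    (nab' : V → V → V)
    (hnab'_addl : ∀ x x' y, nab' (x + x') y = nab' x y + nab' x' y)
    (hnab'_smull : ∀ (f : R) x y, nab' (f • x) y = f • nab' x y)
    (hnab'_addr : ∀ x y y', nab' x (y + y') = nab' x y + nab' x y')
    (hnab'_leib : ∀ (f : R) x y, nab' x (f • y) = Dop x f • y + f • nab' x y)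
    (hTF' : ∀ x y, nab' x y - nab' y x = ⁅x, y⁆)
    (hMC' : ∀ x y z, Dop x (g y (J z)) = g (nab' x y) (J z) + g y (J (nab' x z)))
    (Phi : V → V → V) (hPhi : ∀ x y, Phi x y = nab' x y - nab x y)
    (Phit : V → V → V) (hPhit : ∀ x y, Phit x y = -(Phi x y))
    (cd cdt : V → V → V → V) (Q Qt : V → V → V → V)
    (hcd : ∀ x y z, cd x y z = nab x (Phi y z) - Phi (nab x y) z - Phi y (nab x z))
    (hcdt : ∀ x y z, cdt x y z = nab' x (Phit y z) - Phit (nab' x y) z - Phit y (nab' x z))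
    (hQ : ∀ x y z, Q x y z = cd x y z - cd y x z + Phi x (Phi y z) - Phi y (Phi x z))
    (hQt : ∀ x y z, Qt x y z = cdt x y z - cdt y x z + Phit x (Phit y z) - Phit y (Phit x z))
    (Rc Rc' : V → V → V → V)
    (hRc : ∀ x y z, Rc x y z = nab x (nab y z) - nab y (nab x z) - nab ⁅x, y⁆ z)
    (hRc' : ∀ x y z, Rc' x y z = nab' x (nab' y z) - nab' y (nab' x z) - nab' ⁅x, y⁆ z)
    (A : V → V → V → V)
    (hA : ∀ x y z, A x y z = Phi x (Phi y z) - Phi y (Phi x z))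
    (Dc Dct : V → V → V)
    (hDc : ∀ x y, Dc x y = nab x y + ((1:ℝ)/2) • Phi x y)
    (hDct : ∀ x y, Dct x y = nab' x y + ((1:ℝ)/2) • Phit x y)
    (K Kt : V → V → V → V)
    (hK : ∀ x y z, K x y z = Dc x (Dc y z) - Dc y (Dc x z) - Dc ⁅x, y⁆ z)
    (hKt : ∀ x y z, Kt x y z = Dct x (Dct y z) - Dct y (Dct x z) - Dct ⁅x, y⁆ z) :
    (∀ x y z, K x y z = Rc x y z + ((1:ℝ)/2) • Q x y z - ((1:ℝ)/4) • A x y z) ∧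
    (∀ x y z, Kt x y z = K x y z) := by
  -- Dop annihilates 1 and the constant ½
  have h1 : ∀ x, Dop x 1 = 0 := by
    intro x
    have h := hD_mul x 1 1
    simp only [mul_one, one_mul] at h
    have h0 : Dop x 1 + Dop x 1 = Dop x 1 + 0 := by rw [add_zero]; exact h.symm
    exact add_left_cancel h0
  have hc : ∀ x, Dop x ((algebraMap ℝ R) ((1:ℝ)/2)) = 0 := by
    intro x
    set c := (algebraMap ℝ R) ((1:ℝ)/2) with hcdef
    have hcc : c + c = 1 := by rw [hcdef, ← map_add]; norm_num
    have h2 : Dop x c + Dop x c = 0 := by rw [← hD_add, hcc, h1]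
    calc Dop x c = (c + c) * Dop x c := by rw [hcc, one_mul]
      _ = c * (Dop x c + Dop x c) := by ring
      _ = 0 := by rw [h2, mul_zero]
  have smul_eq : ∀ v : V, ((1:ℝ)/2) • v = ((algebraMap ℝ R) ((1:ℝ)/2)) • v :=
    fun v => (algebraMap_smul R _ v).symm
  have n2 : ∀ x v, nab x (((1:ℝ)/2) • v) = ((1:ℝ)/2) • nab x v := by
    intro x v
    rw [smul_eq, hnab_leib, hc, zero_smul, zero_add, ← smul_eq]
  have n2' : ∀ x v, nab' x (((1:ℝ)/2) • v) = ((1:ℝ)/2) • nab' x v := by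
    intro x v
    rw [smul_eq, hnab'_leib, hc, zero_smul, zero_add, ← smul_eq]
  have Pr_add : ∀ x a b, Phi x (a + b) = Phi x a + Phi x b := by
    intro x a b; simp only [hPhi, hnab_addr, hnab'_addr]; abel
  have Pr_smul : ∀ x v, Phi x (((1:ℝ)/2) • v) = ((1:ℝ)/2) • Phi x v := by
    intro x v; rw [hPhi, n2, n2', hPhi, smul_sub]
  have Pl_add : ∀ a b z, Phi (a + b) z = Phi a z + Phi b z := by
    intro a b z; simp only [hPhi, hnab_addl, hnab'_addl]; abel
  have Pl_br : ∀ x y z, Phi ⁅x, y⁆ z = Phi (nab x y) z - Phi (nab y x) z := by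
    intro x y z
    have h : Phi (nab y x) z + Phi ⁅x, y⁆ z = Phi (nab x y) z := by
      rw [← Pl_add, ← hTF]
      congr 1
      abel
    exact eq_sub_of_add_eq' h
  constructor
  · intro x y z
    simp only [hK, hDc]
    rw [hnab_addr, n2, Pr_add, Pr_smul, hnab_addr, n2, Pr_add, Pr_smul]
    rw [hRc, hQ, hcd, hcd, hA, Pl_br]
    module
  · intro x y z
    have hDD : ∀ a b, Dct a b = Dc a b := by
      intro a b
      rw [hDct, hDc, hPhit, hPhi]
      module
    simp only [hKt, hK, hDD]
end

section
/- The average tensor P(x,y)z = ½{R(x,y)z + R̃(x,y)z} of the two curvature tensors is invariant under the twin interchange, P̃ = P, and it is related to K by K(x,y)z = P(x,y)z - ¼A(x,y)z. -/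
/-- The average tensor P = ½(R + R̃) of the two curvature tensors is invariant under the
twin interchange (P̃ = R̃ + ½Q̃ = P), and K = P - ¼A. -/
theorem average_curvature_tensor_invariant
    (R : Type*) [CommRing R] [Algebra ℝ R]
    (V : Type*) [AddCommGroup V] [Module R V] [Module ℝ V] [IsScalarTower ℝ R V]
    [LieRing V]
    (Dop : V → R → R) (g : V → V → R) (J : V → V) (nab : V → V → V)
    (hg_symm : ∀ x y, g x y = g y x)
    (hg_addl : ∀ x x' y, g (x + x') y = g x y + g x' y)
    (hg_smull : ∀ (f : R) x y, g (f • x) y = f * g x y)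
    (hg_nd : ∀ x, (∀ y, g x y = 0) → x = 0)
    (hJ_add : ∀ x y, J (x + y) = J x + J y)
    (hJ_smul : ∀ (f : R) x, J (f • x) = f • J x)
    (hJJ : ∀ x, J (J x) = -x)
    (hNorden : ∀ x y, g (J x) (J y) = -(g x y))
    (hD_add : ∀ x a b, Dop x (a + b) = Dop x a + Dop x b)
    (hD_mul : ∀ x a b, Dop x (a * b) = Dop x a * b + a * Dop x b)
    (hnab_addl : ∀ x x' y, nab (x + x') y = nab x y + nab x' y)
    (hnab_smull : ∀ (f : R) x y, nab (f • x) y = f • nab x y)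
    (hnab_addr : ∀ x y y', nab x (y + y') = nab x y + nab x y')
    (hnab_leib : ∀ (f : R) x y, nab x (f • y) = Dop x f • y + f • nab x y)
    (hTF : ∀ x y, nab x y - nab y x = ⁅x, y⁆)
    (hMC : ∀ x y z, Dop x (g y z) = g (nab x y) z + g y (nab x z))
    (nab' : V → V → V)
    (hnab'_addl : ∀ x x' y, nab' (x + x') y = nab' x y + nab' x' y)
    (hnab'_smull : ∀ (f : R) x y, nab' (f • x) y = f • nab' x y)
    (hnab'_addr : ∀ x y y', nab' x (y + y') = nab' x y + nab' x y')
    (hnab'_leib : ∀ (f : R) x y, nab' x (f • y) = Dop x f • y + f • nab' x y)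
    (hTF' : ∀ x y, nab' x y - nab' y x = ⁅x, y⁆)
    (hMC' : ∀ x y z, Dop x (g y (J z)) = g (nab' x y) (J z) + g y (J (nab' x z)))
    (Phi : V → V → V) (hPhi : ∀ x y, Phi x y = nab' x y - nab x y)
    (Phit : V → V → V) (hPhit : ∀ x y, Phit x y = -(Phi x y))
    (cd cdt : V → V → V → V) (Q Qt : V → V → V → V)
    (hcd : ∀ x y z, cd x y z = nab x (Phi y z) - Phi (nab x y) z - Phi y (nab x z))
    (hcdt : ∀ x y z, cdt x y z = nab' x (Phit y z) - Phit (nab' x y) z - Phit y (nab' x z))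
    (hQ : ∀ x y z, Q x y z = cd x y z - cd y x z + Phi x (Phi y z) - Phi y (Phi x z))
    (hQt : ∀ x y z, Qt x y z = cdt x y z - cdt y x z + Phit x (Phit y z) - Phit y (Phit x z))
    (Rc Rc' : V → V → V → V)
    (hRc : ∀ x y z, Rc x y z = nab x (nab y z) - nab y (nab x z) - nab ⁅x, y⁆ z)
    (hRc' : ∀ x y z, Rc' x y z = nab' x (nab' y z) - nab' y (nab' x z) - nab' ⁅x, y⁆ z)
    (A : V → V → V → V)
    (hA : ∀ x y z, A x y z = Phi x (Phi y z) - Phi y (Phi x z))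
    (Dc : V → V → V)
    (hDc : ∀ x y, Dc x y = nab x y + ((1:ℝ)/2) • Phi x y)
    (K : V → V → V → V)
    (hK : ∀ x y z, K x y z = Dc x (Dc y z) - Dc y (Dc x z) - Dc ⁅x, y⁆ z)
    (P Pt : V → V → V → V)
    (hP : ∀ x y z, P x y z = ((1:ℝ)/2) • (Rc x y z + Rc' x y z))
    (hPt : ∀ x y z, Pt x y z = Rc' x y z + ((1:ℝ)/2) • Qt x y z) :
    (∀ x y z, Pt x y z = P x y z) ∧
    (∀ x y z, K x y z = P x y z - ((1:ℝ)/4) • A x y z) := by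
  -- basic additivity / negation facts for `nab`
  have hn0 : ∀ x, nab x 0 = 0 := by
    intro x
    have h := hnab_addr x 0 0
    rw [add_zero] at h
    exact (left_eq_add.mp h)
  have hnneg2 : ∀ x w, nab x (-w) = -(nab x w) := by
    intro x w
    have h := hnab_addr x w (-w)
    rw [add_neg_cancel, hn0] at h
    exact eq_neg_of_add_eq_zero_right h.symm
  have hn'0 : ∀ x, nab' x 0 = 0 := by
    intro x
    have h := hnab'_addr x 0 0
    rw [add_zero] at h
    exact (left_eq_add.mp h)
  have hn'neg2 : ∀ x w, nab' x (-w) = -(nab' x w) := by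
    intro x w
    have h := hnab'_addr x w (-w)
    rw [add_neg_cancel, hn'0] at h
    exact eq_neg_of_add_eq_zero_right h.symm
  have hnneg1 : ∀ a y, nab (-a) y = -(nab a y) := by
    intro a y
    have h := hnab_smull (-1 : R) a y
    rwa [neg_one_smul, neg_one_smul] at h
  have hn'neg1 : ∀ a y, nab' (-a) y = -(nab' a y) := by
    intro a y
    have h := hnab'_smull (-1 : R) a y
    rwa [neg_one_smul, neg_one_smul] at h
  have hnsub1 : ∀ a b y, nab (a - b) y = nab a y - nab b y := by
    intro a b y
    rw [sub_eq_add_neg, hnab_addl, hnneg1, ← sub_eq_add_neg]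
  -- `Phi` is additive in both slots, kills negation, and is symmetric
  have hPadd2 : ∀ x a b, Phi x (a + b) = Phi x a + Phi x b := by
    intro x a b
    rw [hPhi, hPhi, hPhi, hnab_addr, hnab'_addr]
    abel
  have hPadd1 : ∀ a b y, Phi (a + b) y = Phi a y + Phi b y := by
    intro a b y
    rw [hPhi, hPhi, hPhi, hnab_addl, hnab'_addl]
    abel
  have hPneg2 : ∀ x w, Phi x (-w) = -(Phi x w) := by
    intro x w
    rw [hPhi, hPhi, hnneg2, hn'neg2]
    abel
  have hPneg1 : ∀ a y, Phi (-a) y = -(Phi a y) := by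
    intro a y
    rw [hPhi, hPhi, hnneg1, hn'neg1]
    abel
  have hPsub1 : ∀ a b y, Phi (a - b) y = Phi a y - Phi b y := by
    intro a b y
    rw [sub_eq_add_neg, hPadd1, hPneg1, ← sub_eq_add_neg]
  have hsym : ∀ x y, Phi x y = Phi y x := by
    intro x y
    rw [hPhi, hPhi]
    have h : nab x y - nab y x = nab' x y - nab' y x := by rw [hTF, hTF']
    rw [sub_eq_sub_iff_add_eq_add] at h ⊢
    exact h.symm.trans (add_comm _ _)
  -- the derivation `Dop x` kills `algebraMap ℝ R (1/2)`
  have hD1 : ∀ x, Dop x 1 = 0 := by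
    intro x
    have h := hD_mul x 1 1
    simp only [one_mul, mul_one] at h
    exact left_eq_add.mp h
  have hDhalf : ∀ x, Dop x (algebraMap ℝ R ((1:ℝ)/2)) = 0 := by
    intro x
    set e := algebraMap ℝ R ((1:ℝ)/2) with he
    have he2 : e + e = 1 := by
      rw [he, ← map_add]
      norm_num
    have h0 : Dop x e + Dop x e = 0 := by
      have h := hD_add x e e
      rw [he2, hD1] at h
      exact h.symm
    calc Dop x e = (e + e) * Dop x e := by rw [he2, one_mul]
      _ = e * (Dop x e + Dop x e) := by ring
      _ = 0 := by rw [h0, mul_zero]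
  have hnhalf : ∀ x w, nab x (((1:ℝ)/2) • w) = ((1:ℝ)/2) • nab x w := by
    intro x w
    rw [← algebraMap_smul R ((1:ℝ)/2) w, hnab_leib, hDhalf, zero_smul, zero_add,
      algebraMap_smul]
  have hn'half : ∀ x w, nab' x (((1:ℝ)/2) • w) = ((1:ℝ)/2) • nab' x w := by
    intro x w
    rw [← algebraMap_smul R ((1:ℝ)/2) w, hnab'_leib, hDhalf, zero_smul, zero_add,
      algebraMap_smul]
  have hPhalf : ∀ x w, Phi x (((1:ℝ)/2) • w) = ((1:ℝ)/2) • Phi x w := by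
    intro x w
    rw [hPhi, hPhi, hnhalf, hn'half, ← smul_sub]
  -- write nab' in terms of nab and Phi
  have hn' : ∀ x y, nab' x y = nab x y + Phi x y := by
    intro x y
    rw [hPhi]
    abel
  constructor
  · intro x y z
    have hQt' : Qt x y z = Rc x y z - Rc' x y z := by
      simp only [hQt, hcdt, hPhit, hRc, hRc', hn', ← hTF, hnab_addr, hPadd2, hPadd1,
        hnsub1, hPsub1, hnneg2, hPneg2]
      rw [hsym y x]
      abel
    rw [hPt, hP, hQt']
    module
  · intro x y z
    simp only [hK, hDc, hP, hA, hRc, hRc', hn', hnab_addr, hPadd2, hnhalf, hPhalf,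
      hPadd1]
    module
end

section
/- If (M,J,g) is an almost Norden manifold in the class W₁, i.e. Φ(x,y,z) = (1/2n){g(x,y)f(z) + g(x,Jy)f(Jz)}, then the tensor A(x,y)z = Φ(x,Φ(y,z)) - Φ(y,Φ(x,z)) equals (1/4n²){g(y,z)h(x) + g(y,Jz)h(Jx) - g(x,z)h(y) - g(x,Jz)h(Jy)}, where h(x) = f(x)f♯ + f(Jx)Jf♯ and f♯ is the g-dual vector of f. -/
/-- On a 2n-dimensional almost Norden manifold of class W₁, where
Φ(x,y,z) = (1/2n){g(x,y)f(z) + g(x,Jy)f(Jz)}, the tensor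
A(x,y)z = Φ(x,Φ(y,z)) - Φ(y,Φ(x,z)) has the form
A(x,y)z = (1/4n²){g(y,z)h(x) + g(y,Jz)h(Jx) - g(x,z)h(y) - g(x,Jz)h(Jy)},
where h(x) = f(x)f♯ + f(Jx)Jf♯ and f♯ is the g-dual of f. -/
theorem W1_tensor_A_formula (n : ℕ) (hn : 0 < n)
    (R : Type*) [CommRing R] [Algebra ℝ R]
    (V : Type*) [AddCommGroup V] [Module R V] [Module ℝ V] [IsScalarTower ℝ R V]
    [LieRing V]
    (Dop : V → R → R) (g : V → V → R) (J : V → V) (nab : V → V → V)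
    (hg_symm : ∀ x y, g x y = g y x)
    (hg_addl : ∀ x x' y, g (x + x') y = g x y + g x' y)
    (hg_smull : ∀ (f : R) x y, g (f • x) y = f * g x y)
    (hg_nd : ∀ x, (∀ y, g x y = 0) → x = 0)
    (hJ_add : ∀ x y, J (x + y) = J x + J y)
    (hJ_smul : ∀ (f : R) x, J (f • x) = f • J x)
    (hJJ : ∀ x, J (J x) = -x)
    (hNorden : ∀ x y, g (J x) (J y) = -(g x y))
    (hD_add : ∀ x a b, Dop x (a + b) = Dop x a + Dop x b)
    (hD_mul : ∀ x a b, Dop x (a * b) = Dop x a * b + a * Dop x b)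
    (hnab_addl : ∀ x x' y, nab (x + x') y = nab x y + nab x' y)
    (hnab_smull : ∀ (f : R) x y, nab (f • x) y = f • nab x y)
    (hnab_addr : ∀ x y y', nab x (y + y') = nab x y + nab x y')
    (hnab_leib : ∀ (f : R) x y, nab x (f • y) = Dop x f • y + f • nab x y)
    (hTF : ∀ x y, nab x y - nab y x = ⁅x, y⁆)
    (hMC : ∀ x y z, Dop x (g y z) = g (nab x y) z + g y (nab x z))
    (nab' : V → V → V)
    (hnab'_addl : ∀ x x' y, nab' (x + x') y = nab' x y + nab' x' y)
    (hnab'_smull : ∀ (f : R) x y, nab' (f • x) y = f • nab' x y)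
    (hnab'_addr : ∀ x y y', nab' x (y + y') = nab' x y + nab' x y')
    (hnab'_leib : ∀ (f : R) x y, nab' x (f • y) = Dop x f • y + f • nab' x y)
    (hTF' : ∀ x y, nab' x y - nab' y x = ⁅x, y⁆)
    (hMC' : ∀ x y z, Dop x (g y (J z)) = g (nab' x y) (J z) + g y (J (nab' x z)))
    (Phi : V → V → V) (hPhi : ∀ x y, Phi x y = nab' x y - nab x y)
    (f : V → R) (fsharp : V)
    (hfdual : ∀ z, f z = g fsharp z)
    (hW1 : ∀ x y z, g (Phi x y) z =
      ((1:ℝ)/(2*(n:ℝ))) • (g x y * f z + g x (J y) * f (J z)))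
    (h : V → V)
    (hh : ∀ x, h x = f x • fsharp + f (J x) • J fsharp)
    (A : V → V → V → V)
    (hA : ∀ x y z, A x y z = Phi x (Phi y z) - Phi y (Phi x z)) :
    ∀ x y z, A x y z = ((1:ℝ)/(4*(n:ℝ)^2)) •
      (g y z • h x + g y (J z) • h (J x) - g x z • h y - g x (J z) • h (J y)) := by
  -- basic bilinearity facts for g
  have hg_smulr : ∀ (r : R) x y, g x (r • y) = r * g x y := fun r x y => by
    rw [hg_symm, hg_smull, hg_symm]
  have hg_addr : ∀ x y y', g x (y + y') = g x y + g x y' := fun x y y' => by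
    rw [hg_symm, hg_addl, hg_symm y x, hg_symm y' x]
  have hg_negr : ∀ x y, g x (-y) = -(g x y) := fun x y => by
    rw [← neg_one_smul R y, hg_smulr]; ring
  have hg_negl : ∀ x y, g (-x) y = -(g x y) := fun x y => by
    rw [hg_symm, hg_negr, hg_symm]
  have hg_subl : ∀ x x' y, g (x - x') y = g x y - g x' y := fun x x' y => by
    rw [sub_eq_add_neg, hg_addl, hg_negl, sub_eq_add_neg]
  have hgJ : ∀ a b, g (J a) b = g a (J b) := fun a b => by
    have h1 := hNorden a (J b)
    rw [hJJ, hg_negr] at h1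
    exact neg_injective h1
  have halg : ∀ (r : ℝ) (v : V), r • v = (algebraMap ℝ R r) • v := fun r v =>
    (algebraMap_smul R r v).symm
  set C : R := algebraMap ℝ R ((1:ℝ)/(2*(n:ℝ))) with hC
  -- pointwise formula for Phi
  have hPhiF : ∀ x y, Phi x y = C • (g x y • fsharp + g x (J y) • J fsharp) := by
    intro x y
    have key : ∀ z, g (Phi x y - C • (g x y • fsharp + g x (J y) • J fsharp)) z = 0 := by
      intro z
      rw [hg_subl, hW1, hg_smull, hg_addl, hg_smull, hg_smull, hfdual, hfdual,
        Algebra.smul_def, hgJ fsharp z]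
      ring
    exact sub_eq_zero.mp (hg_nd _ key)
  have hn' : (n:ℝ) ≠ 0 := Nat.cast_ne_zero.mpr hn.ne'
  have hCC : C * C = algebraMap ℝ R ((1:ℝ)/(4*(n:ℝ)^2)) := by
    rw [← map_mul]
    congr 1
    field_simp
    ring
  have hfs : ∀ w, g fsharp w = g w fsharp := fun w => hg_symm _ _
  have hfsJ : ∀ w, g fsharp (J w) = g w (J fsharp) := fun w => by
    rw [← hgJ, hg_symm]
  intro x y z
  rw [hA, halg, ← hCC]
  simp only [hPhiF, hh, hfdual]
  simp only [hJ_add, hJ_smul, hJJ, smul_neg, hg_addr, hg_smulr, hg_negr, hg_negl,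
    hfs, hfsJ, hgJ]
  match_scalars <;> ring
end

section
/- Let 𝔩 be the 4-dimensional Lie algebra with basis X₁,...,X₄ and nonzero brackets [X₁,X₄]=[X₂,X₃]=λ₁X₁+λ₂X₂+λ₃X₃+λ₄X₄ and [X₁,X₃]=[X₄,X₂]=λ₂X₁-λ₁X₂+λ₄X₃-λ₃X₄ (λᵢ real). Then the Jacobi identity holds, so 𝔩 is a Lie algebra, and the complex structure J with JX₁=X₃, JX₂=X₄, JX₃=-X₁, JX₄=-X₂ satisfies [JX,JY]=[X,Y] for all X,Y (J is Abelian). -/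
/-- The 4-dimensional bracket with [X₁,X₄]=[X₂,X₃]=λ₁X₁+λ₂X₂+λ₃X₃+λ₄X₄ and
[X₁,X₃]=[X₄,X₂]=λ₂X₁-λ₁X₂+λ₄X₃-λ₃X₄ is skew and satisfies the Jacobi identity (so it
defines a Lie algebra), and the complex structure J (JX₁=X₃, JX₂=X₄, JX₃=-X₁, JX₄=-X₂)
is Abelian: [JX,JY] = [X,Y]. -/
theorem lie_algebra_example_jacobi_abelian
    (l1 l2 l3 l4 : ℝ)
    (b : (Fin 4 → ℝ) → (Fin 4 → ℝ) → (Fin 4 → ℝ))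
    (hb : ∀ x y, b x y =
      (x 0 * y 3 - x 3 * y 0 + x 1 * y 2 - x 2 * y 1) • ![l1, l2, l3, l4] +
      (x 0 * y 2 - x 2 * y 0 + x 3 * y 1 - x 1 * y 3) • ![l2, -l1, l4, -l3])
    (Jm : (Fin 4 → ℝ) → (Fin 4 → ℝ))
    (hJm : ∀ x, Jm x = ![-(x 2), -(x 3), x 0, x 1])
 :
    (∀ x y, b x y = -(b y x)) ∧
    (∀ x y z, b x (b y z) + b y (b z x) + b z (b x y) = 0) ∧
    (∀ x y, b (Jm x) (Jm y) = b x y) := by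
  refine ⟨?_, ?_, ?_⟩
  · intro x y
    simp only [hb]
    funext i
    fin_cases i <;> simp [Matrix.cons_val_zero, Matrix.cons_val_one] <;> ring
  · intro x y z
    simp only [hb]
    funext i
    fin_cases i <;> simp [Matrix.cons_val_zero, Matrix.cons_val_one] <;> ring
  · intro x y
    simp only [hb, hJm]
    funext i
    fin_cases i <;> simp [Matrix.cons_val_zero, Matrix.cons_val_one] <;> ring
end

section
/- For the 4-dimensional Lie group example with metric g(X₁,X₁)=g(X₂,X₂)=-g(X₃,X₃)=-g(X₄,X₄)=1 (off-diagonal zero) and the stated Lie brackets, the scalar curvature of the Levi-Civita connection of g is τ = 6(λ₁²+λ₂²-λ₃²-λ₄²), and the square norm of ∇J is ‖∇J‖² = 16(λ₁²+λ₂²-λ₃²-λ₄²); hence the manifold is scalar flat if and only if it is isotropic Kähler (‖∇J‖²=0), which holds iff λ₁²+λ₂²=λ₃²+λ₄². -/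
set_option maxHeartbeats 1000000


/-- For the 4-dimensional Lie group example with neutral metric
g = diag(1,1,-1,-1), the scalar curvature is τ = 6(λ₁²+λ₂²-λ₃²-λ₄²) and
‖∇J‖² = 16(λ₁²+λ₂²-λ₃²-λ₄²); hence scalar flatness, isotropic Kählerness, and the
condition λ₁²+λ₂² = λ₃²+λ₄² are all equivalent.  (Here gⁱʲ = g(eᵢ,eⱼ) since the metric is
its own inverse in the standard basis.) -/
theorem lie_group_example_scalar_curvature_and_norm
    (l1 l2 l3 l4 : ℝ)
    (b : (Fin 4 → ℝ) → (Fin 4 → ℝ) → (Fin 4 → ℝ))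
    (hb : ∀ x y, b x y =
      (x 0 * y 3 - x 3 * y 0 + x 1 * y 2 - x 2 * y 1) • ![l1, l2, l3, l4] +
      (x 0 * y 2 - x 2 * y 0 + x 3 * y 1 - x 1 * y 3) • ![l2, -l1, l4, -l3])
    (Jm : (Fin 4 → ℝ) → (Fin 4 → ℝ))
    (hJm : ∀ x, Jm x = ![-(x 2), -(x 3), x 0, x 1])
    (g : (Fin 4 → ℝ) → (Fin 4 → ℝ) → ℝ)
    (hg : ∀ x y, g x y = x 0 * y 0 + x 1 * y 1 - x 2 * y 2 - x 3 * y 3)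
    (nab : (Fin 4 → ℝ) → (Fin 4 → ℝ) → (Fin 4 → ℝ))
    (hKoszul : ∀ x y z, 2 * g (nab x y) z = g (b x y) z + g (b z x) y + g (b z y) x)
    (e : Fin 4 → (Fin 4 → ℝ)) (he : ∀ i, e i = Pi.single i 1)
    (Rm : (Fin 4 → ℝ) → (Fin 4 → ℝ) → (Fin 4 → ℝ) → (Fin 4 → ℝ))
    (hRm : ∀ x y z, Rm x y z = nab x (nab y z) - nab y (nab x z) - nab (b x y) z)
    (tau : ℝ)
    (htau : tau = ∑ i, ∑ j, ∑ k, ∑ l,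
      g (e i) (e j) * g (e k) (e l) * g (Rm (e i) (e k) (e l)) (e j))
    (F : (Fin 4 → ℝ) → (Fin 4 → ℝ) → (Fin 4 → ℝ) → ℝ)
    (hF : ∀ x y z, F x y z = g (nab x (Jm y) - Jm (nab x y)) z)
    (sn : ℝ)
    (hsn : sn = ∑ i, ∑ j, ∑ k, ∑ l, ∑ p, ∑ q,
      g (e i) (e j) * g (e k) (e l) * g (e p) (e q) *
        F (e i) (e k) (e p) * F (e j) (e l) (e q)) :
    tau = 6 * (l1^2 + l2^2 - l3^2 - l4^2) ∧
    sn = 16 * (l1^2 + l2^2 - l3^2 - l4^2) ∧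
    (tau = 0 ↔ sn = 0) ∧
    (sn = 0 ↔ l1^2 + l2^2 = l3^2 + l4^2) := by
  have hnab : ∀ x y : Fin 4 → ℝ, nab x y =
      ![l1*(x 0)*(y 3) - l1*(x 2)*(y 1) + l2*(x 0)*(y 2) + l2*(x 3)*(y 1) - l4*(x 2)*(y 2) - l4*(x 3)*(y 3),
        l1*(x 1)*(y 3) + l1*(x 2)*(y 0) + l2*(x 1)*(y 2) - l2*(x 3)*(y 0) - l3*(x 2)*(y 2) - l3*(x 3)*(y 3),
        l2*(x 0)*(y 0) + l2*(x 1)*(y 1) + l3*(x 0)*(y 3) - l3*(x 2)*(y 1) - l4*(x 1)*(y 3) - l4*(x 2)*(y 0),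
        l1*(x 0)*(y 0) + l1*(x 1)*(y 1) - l3*(x 0)*(y 2) - l3*(x 3)*(y 1) + l4*(x 1)*(y 2) - l4*(x 3)*(y 0)] := by
    intro x y
    funext k
    fin_cases k
    · have h := hKoszul x y (e 0)
      simp only [hb, hg, he, Pi.single_apply, Pi.add_apply, Pi.smul_apply, smul_eq_mul] at h
      simp at h ⊢
      linear_combination h / 2
    · have h := hKoszul x y (e 1)
      simp only [hb, hg, he, Pi.single_apply, Pi.add_apply, Pi.smul_apply, smul_eq_mul] at h
      simp at h ⊢
      linear_combination h / 2
    · have h := hKoszul x y (e 2)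
      simp only [hb, hg, he, Pi.single_apply, Pi.add_apply, Pi.smul_apply, smul_eq_mul] at h
      simp at h ⊢
      linear_combination -h / 2
    · have h := hKoszul x y (e 3)
      simp only [hb, hg, he, Pi.single_apply, Pi.add_apply, Pi.smul_apply, smul_eq_mul] at h
      simp at h ⊢
      linear_combination -h / 2
  have hg00 : g (e 0) (e 0) = 1 := by simp [hg, he, Pi.single_apply]
  have hg01 : g (e 0) (e 1) = 0 := by simp [hg, he, Pi.single_apply]
  have hg02 : g (e 0) (e 2) = 0 := by simp [hg, he, Pi.single_apply]
  have hg03 : g (e 0) (e 3) = 0 := by simp [hg, he, Pi.single_apply]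
  have hg10 : g (e 1) (e 0) = 0 := by simp [hg, he, Pi.single_apply]
  have hg11 : g (e 1) (e 1) = 1 := by simp [hg, he, Pi.single_apply]
  have hg12 : g (e 1) (e 2) = 0 := by simp [hg, he, Pi.single_apply]
  have hg13 : g (e 1) (e 3) = 0 := by simp [hg, he, Pi.single_apply]
  have hg20 : g (e 2) (e 0) = 0 := by simp [hg, he, Pi.single_apply]
  have hg21 : g (e 2) (e 1) = 0 := by simp [hg, he, Pi.single_apply]
  have hg22 : g (e 2) (e 2) = -1 := by simp [hg, he, Pi.single_apply]
  have hg23 : g (e 2) (e 3) = 0 := by simp [hg, he, Pi.single_apply]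
  have hg30 : g (e 3) (e 0) = 0 := by simp [hg, he, Pi.single_apply]
  have hg31 : g (e 3) (e 1) = 0 := by simp [hg, he, Pi.single_apply]
  have hg32 : g (e 3) (e 2) = 0 := by simp [hg, he, Pi.single_apply]
  have hg33 : g (e 3) (e 3) = -1 := by simp [hg, he, Pi.single_apply]
  have hR00 : g (Rm (e 0) (e 0) (e 0)) (e 0) = 0 := by
    rw [hRm]
    simp [hnab, hb, hg, he, Pi.single_apply, Pi.sub_apply]
    try ring
  have hR01 : g (Rm (e 0) (e 1) (e 1)) (e 0) = l2*l2 + l1*l1 := by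
    rw [hRm]
    simp [hnab, hb, hg, he, Pi.single_apply, Pi.sub_apply]
    try ring
  have hR02 : g (Rm (e 0) (e 2) (e 2)) (e 0) = l4*l4 + (-1)*l2*l2 := by
    rw [hRm]
    simp [hnab, hb, hg, he, Pi.single_apply, Pi.sub_apply]
    try ring
  have hR03 : g (Rm (e 0) (e 3) (e 3)) (e 0) = l4*l4 + (-1)*l1*l1 := by
    rw [hRm]
    simp [hnab, hb, hg, he, Pi.single_apply, Pi.sub_apply]
    try ring
  have hR10 : g (Rm (e 1) (e 0) (e 0)) (e 1) = l2*l2 + l1*l1 := by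
    rw [hRm]
    simp [hnab, hb, hg, he, Pi.single_apply, Pi.sub_apply]
    try ring
  have hR11 : g (Rm (e 1) (e 1) (e 1)) (e 1) = 0 := by
    rw [hRm]
    simp [hnab, hb, hg, he, Pi.single_apply, Pi.sub_apply]
    try ring
  have hR12 : g (Rm (e 1) (e 2) (e 2)) (e 1) = l3*l3 + (-1)*l2*l2 := by
    rw [hRm]
    simp [hnab, hb, hg, he, Pi.single_apply, Pi.sub_apply]
    try ring
  have hR13 : g (Rm (e 1) (e 3) (e 3)) (e 1) = l3*l3 + (-1)*l1*l1 := by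
    rw [hRm]
    simp [hnab, hb, hg, he, Pi.single_apply, Pi.sub_apply]
    try ring
  have hR20 : g (Rm (e 2) (e 0) (e 0)) (e 2) = l4*l4 + (-1)*l2*l2 := by
    rw [hRm]
    simp [hnab, hb, hg, he, Pi.single_apply, Pi.sub_apply]
    try ring
  have hR21 : g (Rm (e 2) (e 1) (e 1)) (e 2) = l3*l3 + (-1)*l2*l2 := by
    rw [hRm]
    simp [hnab, hb, hg, he, Pi.single_apply, Pi.sub_apply]
    try ring
  have hR22 : g (Rm (e 2) (e 2) (e 2)) (e 2) = 0 := by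
    rw [hRm]
    simp [hnab, hb, hg, he, Pi.single_apply, Pi.sub_apply]
    try ring
  have hR23 : g (Rm (e 2) (e 3) (e 3)) (e 2) = (-1)*l4*l4 + (-1)*l3*l3 := by
    rw [hRm]
    simp [hnab, hb, hg, he, Pi.single_apply, Pi.sub_apply]
    try ring
  have hR30 : g (Rm (e 3) (e 0) (e 0)) (e 3) = l4*l4 + (-1)*l1*l1 := by
    rw [hRm]
    simp [hnab, hb, hg, he, Pi.single_apply, Pi.sub_apply]
    try ring
  have hR31 : g (Rm (e 3) (e 1) (e 1)) (e 3) = l3*l3 + (-1)*l1*l1 := by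
    rw [hRm]
    simp [hnab, hb, hg, he, Pi.single_apply, Pi.sub_apply]
    try ring
  have hR32 : g (Rm (e 3) (e 2) (e 2)) (e 3) = (-1)*l4*l4 + (-1)*l3*l3 := by
    rw [hRm]
    simp [hnab, hb, hg, he, Pi.single_apply, Pi.sub_apply]
    try ring
  have hR33 : g (Rm (e 3) (e 3) (e 3)) (e 3) = 0 := by
    rw [hRm]
    simp [hnab, hb, hg, he, Pi.single_apply, Pi.sub_apply]
    try ring
  have hF000 : F (e 0) (e 0) (e 0) = 2*l2 := by
    rw [hF]
    simp [hnab, hJm, hg, he, Pi.single_apply, Pi.sub_apply]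
    try ring
  have hF001 : F (e 0) (e 0) (e 1) = l1 := by
    rw [hF]
    simp [hnab, hJm, hg, he, Pi.single_apply, Pi.sub_apply]
    try ring
  have hF002 : F (e 0) (e 0) (e 2) = 0 := by
    rw [hF]
    simp [hnab, hJm, hg, he, Pi.single_apply, Pi.sub_apply]
    try ring
  have hF003 : F (e 0) (e 0) (e 3) = l3 := by
    rw [hF]
    simp [hnab, hJm, hg, he, Pi.single_apply, Pi.sub_apply]
    try ring
  have hF010 : F (e 0) (e 1) (e 0) = l1 := by
    rw [hF]
    simp [hnab, hJm, hg, he, Pi.single_apply, Pi.sub_apply]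
    try ring
  have hF011 : F (e 0) (e 1) (e 1) = 0 := by
    rw [hF]
    simp [hnab, hJm, hg, he, Pi.single_apply, Pi.sub_apply]
    try ring
  have hF012 : F (e 0) (e 1) (e 2) = (-1)*l3 := by
    rw [hF]
    simp [hnab, hJm, hg, he, Pi.single_apply, Pi.sub_apply]
    try ring
  have hF013 : F (e 0) (e 1) (e 3) = 0 := by
    rw [hF]
    simp [hnab, hJm, hg, he, Pi.single_apply, Pi.sub_apply]
    try ring
  have hF020 : F (e 0) (e 2) (e 0) = 0 := by
    rw [hF]
    simp [hnab, hJm, hg, he, Pi.single_apply, Pi.sub_apply]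
    try ring
  have hF021 : F (e 0) (e 2) (e 1) = (-1)*l3 := by
    rw [hF]
    simp [hnab, hJm, hg, he, Pi.single_apply, Pi.sub_apply]
    try ring
  have hF022 : F (e 0) (e 2) (e 2) = 2*l2 := by
    rw [hF]
    simp [hnab, hJm, hg, he, Pi.single_apply, Pi.sub_apply]
    try ring
  have hF023 : F (e 0) (e 2) (e 3) = l1 := by
    rw [hF]
    simp [hnab, hJm, hg, he, Pi.single_apply, Pi.sub_apply]
    try ring
  have hF030 : F (e 0) (e 3) (e 0) = l3 := by
    rw [hF]
    simp [hnab, hJm, hg, he, Pi.single_apply, Pi.sub_apply]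
    try ring
  have hF031 : F (e 0) (e 3) (e 1) = 0 := by
    rw [hF]
    simp [hnab, hJm, hg, he, Pi.single_apply, Pi.sub_apply]
    try ring
  have hF032 : F (e 0) (e 3) (e 2) = l1 := by
    rw [hF]
    simp [hnab, hJm, hg, he, Pi.single_apply, Pi.sub_apply]
    try ring
  have hF033 : F (e 0) (e 3) (e 3) = 0 := by
    rw [hF]
    simp [hnab, hJm, hg, he, Pi.single_apply, Pi.sub_apply]
    try ring
  have hF100 : F (e 1) (e 0) (e 0) = 0 := by
    rw [hF]
    simp [hnab, hJm, hg, he, Pi.single_apply, Pi.sub_apply]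
    try ring
  have hF101 : F (e 1) (e 0) (e 1) = l2 := by
    rw [hF]
    simp [hnab, hJm, hg, he, Pi.single_apply, Pi.sub_apply]
    try ring
  have hF102 : F (e 1) (e 0) (e 2) = 0 := by
    rw [hF]
    simp [hnab, hJm, hg, he, Pi.single_apply, Pi.sub_apply]
    try ring
  have hF103 : F (e 1) (e 0) (e 3) = (-1)*l4 := by
    rw [hF]
    simp [hnab, hJm, hg, he, Pi.single_apply, Pi.sub_apply]
    try ring
  have hF110 : F (e 1) (e 1) (e 0) = l2 := by
    rw [hF]
    simp [hnab, hJm, hg, he, Pi.single_apply, Pi.sub_apply]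
    try ring
  have hF111 : F (e 1) (e 1) (e 1) = 2*l1 := by
    rw [hF]
    simp [hnab, hJm, hg, he, Pi.single_apply, Pi.sub_apply]
    try ring
  have hF112 : F (e 1) (e 1) (e 2) = l4 := by
    rw [hF]
    simp [hnab, hJm, hg, he, Pi.single_apply, Pi.sub_apply]
    try ring
  have hF113 : F (e 1) (e 1) (e 3) = 0 := by
    rw [hF]
    simp [hnab, hJm, hg, he, Pi.single_apply, Pi.sub_apply]
    try ring
  have hF120 : F (e 1) (e 2) (e 0) = 0 := by
    rw [hF]
    simp [hnab, hJm, hg, he, Pi.single_apply, Pi.sub_apply]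
    try ring
  have hF121 : F (e 1) (e 2) (e 1) = l4 := by
    rw [hF]
    simp [hnab, hJm, hg, he, Pi.single_apply, Pi.sub_apply]
    try ring
  have hF122 : F (e 1) (e 2) (e 2) = 0 := by
    rw [hF]
    simp [hnab, hJm, hg, he, Pi.single_apply, Pi.sub_apply]
    try ring
  have hF123 : F (e 1) (e 2) (e 3) = l2 := by
    rw [hF]
    simp [hnab, hJm, hg, he, Pi.single_apply, Pi.sub_apply]
    try ring
  have hF130 : F (e 1) (e 3) (e 0) = (-1)*l4 := by
    rw [hF]
    simp [hnab, hJm, hg, he, Pi.single_apply, Pi.sub_apply]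
    try ring
  have hF131 : F (e 1) (e 3) (e 1) = 0 := by
    rw [hF]
    simp [hnab, hJm, hg, he, Pi.single_apply, Pi.sub_apply]
    try ring
  have hF132 : F (e 1) (e 3) (e 2) = l2 := by
    rw [hF]
    simp [hnab, hJm, hg, he, Pi.single_apply, Pi.sub_apply]
    try ring
  have hF133 : F (e 1) (e 3) (e 3) = 2*l1 := by
    rw [hF]
    simp [hnab, hJm, hg, he, Pi.single_apply, Pi.sub_apply]
    try ring
  have hF200 : F (e 2) (e 0) (e 0) = (-2)*l4 := by
    rw [hF]
    simp [hnab, hJm, hg, he, Pi.single_apply, Pi.sub_apply]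
    try ring
  have hF201 : F (e 2) (e 0) (e 1) = (-1)*l3 := by
    rw [hF]
    simp [hnab, hJm, hg, he, Pi.single_apply, Pi.sub_apply]
    try ring
  have hF202 : F (e 2) (e 0) (e 2) = 0 := by
    rw [hF]
    simp [hnab, hJm, hg, he, Pi.single_apply, Pi.sub_apply]
    try ring
  have hF203 : F (e 2) (e 0) (e 3) = l1 := by
    rw [hF]
    simp [hnab, hJm, hg, he, Pi.single_apply, Pi.sub_apply]
    try ring
  have hF210 : F (e 2) (e 1) (e 0) = (-1)*l3 := by
    rw [hF]
    simp [hnab, hJm, hg, he, Pi.single_apply, Pi.sub_apply]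
    try ring
  have hF211 : F (e 2) (e 1) (e 1) = 0 := by
    rw [hF]
    simp [hnab, hJm, hg, he, Pi.single_apply, Pi.sub_apply]
    try ring
  have hF212 : F (e 2) (e 1) (e 2) = (-1)*l1 := by
    rw [hF]
    simp [hnab, hJm, hg, he, Pi.single_apply, Pi.sub_apply]
    try ring
  have hF213 : F (e 2) (e 1) (e 3) = 0 := by
    rw [hF]
    simp [hnab, hJm, hg, he, Pi.single_apply, Pi.sub_apply]
    try ring
  have hF220 : F (e 2) (e 2) (e 0) = 0 := by
    rw [hF]
    simp [hnab, hJm, hg, he, Pi.single_apply, Pi.sub_apply]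
    try ring
  have hF221 : F (e 2) (e 2) (e 1) = (-1)*l1 := by
    rw [hF]
    simp [hnab, hJm, hg, he, Pi.single_apply, Pi.sub_apply]
    try ring
  have hF222 : F (e 2) (e 2) (e 2) = (-2)*l4 := by
    rw [hF]
    simp [hnab, hJm, hg, he, Pi.single_apply, Pi.sub_apply]
    try ring
  have hF223 : F (e 2) (e 2) (e 3) = (-1)*l3 := by
    rw [hF]
    simp [hnab, hJm, hg, he, Pi.single_apply, Pi.sub_apply]
    try ring
  have hF230 : F (e 2) (e 3) (e 0) = l1 := by
    rw [hF]
    simp [hnab, hJm, hg, he, Pi.single_apply, Pi.sub_apply]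
    try ring
  have hF231 : F (e 2) (e 3) (e 1) = 0 := by
    rw [hF]
    simp [hnab, hJm, hg, he, Pi.single_apply, Pi.sub_apply]
    try ring
  have hF232 : F (e 2) (e 3) (e 2) = (-1)*l3 := by
    rw [hF]
    simp [hnab, hJm, hg, he, Pi.single_apply, Pi.sub_apply]
    try ring
  have hF233 : F (e 2) (e 3) (e 3) = 0 := by
    rw [hF]
    simp [hnab, hJm, hg, he, Pi.single_apply, Pi.sub_apply]
    try ring
  have hF300 : F (e 3) (e 0) (e 0) = 0 := by
    rw [hF]
    simp [hnab, hJm, hg, he, Pi.single_apply, Pi.sub_apply]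
    try ring
  have hF301 : F (e 3) (e 0) (e 1) = (-1)*l4 := by
    rw [hF]
    simp [hnab, hJm, hg, he, Pi.single_apply, Pi.sub_apply]
    try ring
  have hF302 : F (e 3) (e 0) (e 2) = 0 := by
    rw [hF]
    simp [hnab, hJm, hg, he, Pi.single_apply, Pi.sub_apply]
    try ring
  have hF303 : F (e 3) (e 0) (e 3) = (-1)*l2 := by
    rw [hF]
    simp [hnab, hJm, hg, he, Pi.single_apply, Pi.sub_apply]
    try ring
  have hF310 : F (e 3) (e 1) (e 0) = (-1)*l4 := by
    rw [hF]
    simp [hnab, hJm, hg, he, Pi.single_apply, Pi.sub_apply]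
    try ring
  have hF311 : F (e 3) (e 1) (e 1) = (-2)*l3 := by
    rw [hF]
    simp [hnab, hJm, hg, he, Pi.single_apply, Pi.sub_apply]
    try ring
  have hF312 : F (e 3) (e 1) (e 2) = l2 := by
    rw [hF]
    simp [hnab, hJm, hg, he, Pi.single_apply, Pi.sub_apply]
    try ring
  have hF313 : F (e 3) (e 1) (e 3) = 0 := by
    rw [hF]
    simp [hnab, hJm, hg, he, Pi.single_apply, Pi.sub_apply]
    try ring
  have hF320 : F (e 3) (e 2) (e 0) = 0 := by
    rw [hF]
    simp [hnab, hJm, hg, he, Pi.single_apply, Pi.sub_apply]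
    try ring
  have hF321 : F (e 3) (e 2) (e 1) = l2 := by
    rw [hF]
    simp [hnab, hJm, hg, he, Pi.single_apply, Pi.sub_apply]
    try ring
  have hF322 : F (e 3) (e 2) (e 2) = 0 := by
    rw [hF]
    simp [hnab, hJm, hg, he, Pi.single_apply, Pi.sub_apply]
    try ring
  have hF323 : F (e 3) (e 2) (e 3) = (-1)*l4 := by
    rw [hF]
    simp [hnab, hJm, hg, he, Pi.single_apply, Pi.sub_apply]
    try ring
  have hF330 : F (e 3) (e 3) (e 0) = (-1)*l2 := by
    rw [hF]
    simp [hnab, hJm, hg, he, Pi.single_apply, Pi.sub_apply]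
    try ring
  have hF331 : F (e 3) (e 3) (e 1) = 0 := by
    rw [hF]
    simp [hnab, hJm, hg, he, Pi.single_apply, Pi.sub_apply]
    try ring
  have hF332 : F (e 3) (e 3) (e 2) = (-1)*l4 := by
    rw [hF]
    simp [hnab, hJm, hg, he, Pi.single_apply, Pi.sub_apply]
    try ring
  have hF333 : F (e 3) (e 3) (e 3) = (-2)*l3 := by
    rw [hF]
    simp [hnab, hJm, hg, he, Pi.single_apply, Pi.sub_apply]
    try ring
  have htau' : tau = 6 * (l1^2 + l2^2 - l3^2 - l4^2) := by
    rw [htau]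
    simp only [Fin.sum_univ_four, hg00, hg01, hg02, hg03, hg10, hg11, hg12, hg13, hg20, hg21, hg22, hg23, hg30, hg31, hg32, hg33, zero_mul, mul_zero, one_mul, mul_one, neg_mul, mul_neg,
      neg_neg, zero_add, add_zero, neg_zero, hR00, hR01, hR02, hR03, hR10, hR11, hR12, hR13, hR20, hR21, hR22, hR23, hR30, hR31, hR32, hR33]
    try ring
  have hsn' : sn = 16 * (l1^2 + l2^2 - l3^2 - l4^2) := by
    rw [hsn]
    simp only [Fin.sum_univ_four, hg00, hg01, hg02, hg03, hg10, hg11, hg12, hg13, hg20, hg21, hg22, hg23, hg30, hg31, hg32, hg33, zero_mul, mul_zero, one_mul, mul_one, neg_mul, mul_neg,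
      neg_neg, zero_add, add_zero, neg_zero, hF000, hF001, hF002, hF003, hF010, hF011, hF012, hF013, hF020, hF021, hF022, hF023, hF030, hF031, hF032, hF033, hF100, hF101, hF102, hF103, hF110, hF111, hF112, hF113, hF120, hF121, hF122, hF123, hF130, hF131, hF132, hF133, hF200, hF201, hF202, hF203, hF210, hF211, hF212, hF213, hF220, hF221, hF222, hF223, hF230, hF231, hF232, hF233, hF300, hF301, hF302, hF303, hF310, hF311, hF312, hF313, hF320, hF321, hF322, hF323, hF330, hF331, hF332, hF333]
    try ring
  refine ⟨htau', hsn', ?_, ?_⟩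
  · rw [htau', hsn']; constructor <;> intro h <;> linarith
  · rw [hsn']; constructor <;> intro h <;> linarith
end

section
/- For the 4-dimensional Lie group example, the Weyl tensor of the metric g vanishes identically, so the curvature tensor has the form R = -½ g⊘ρ + (τ/12) g⊘g, where ⊘ denotes the Kulkarni–Nomizu product; in particular (L,J,g) is locally conformally flat. -/
set_option maxHeartbeats 1600000

/-- For the 4-dimensional Lie group example, the Weyl tensor
W = R + ½ g⊘ρ - (τ/12) g⊘g vanishes identically, i.e.
R = -½ g⊘ρ + (τ/12) g⊘g; in particular the manifold is locally conformally flat. -/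
theorem lie_group_example_weyl_vanishes
    (l1 l2 l3 l4 : ℝ)
    (b : (Fin 4 → ℝ) → (Fin 4 → ℝ) → (Fin 4 → ℝ))
    (hb : ∀ x y, b x y =
      (x 0 * y 3 - x 3 * y 0 + x 1 * y 2 - x 2 * y 1) • ![l1, l2, l3, l4] +
      (x 0 * y 2 - x 2 * y 0 + x 3 * y 1 - x 1 * y 3) • ![l2, -l1, l4, -l3])
    (Jm : (Fin 4 → ℝ) → (Fin 4 → ℝ))
    (hJm : ∀ x, Jm x = ![-(x 2), -(x 3), x 0, x 1])
    (g : (Fin 4 → ℝ) → (Fin 4 → ℝ) → ℝ)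
    (hg : ∀ x y, g x y = x 0 * y 0 + x 1 * y 1 - x 2 * y 2 - x 3 * y 3)
    (nab : (Fin 4 → ℝ) → (Fin 4 → ℝ) → (Fin 4 → ℝ))
    (hKoszul : ∀ x y z, 2 * g (nab x y) z = g (b x y) z + g (b z x) y + g (b z y) x)
    (e : Fin 4 → (Fin 4 → ℝ)) (he : ∀ i, e i = Pi.single i 1)
    (Rm : (Fin 4 → ℝ) → (Fin 4 → ℝ) → (Fin 4 → ℝ) → (Fin 4 → ℝ))
    (hRm : ∀ x y z, Rm x y z = nab x (nab y z) - nab y (nab x z) - nab (b x y) z)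
    (tau : ℝ)
    (htau : tau = ∑ i, ∑ j, ∑ k, ∑ l,
      g (e i) (e j) * g (e k) (e l) * g (Rm (e i) (e k) (e l)) (e j))
    (rho : (Fin 4 → ℝ) → (Fin 4 → ℝ) → ℝ)
    (hrho : ∀ y z, rho y z = ∑ i, ∑ j, g (e i) (e j) * g (Rm (e i) y z) (e j))
    (kn : ((Fin 4 → ℝ) → (Fin 4 → ℝ) → ℝ) → ((Fin 4 → ℝ) → (Fin 4 → ℝ) → ℝ) →
      (Fin 4 → ℝ) → (Fin 4 → ℝ) → (Fin 4 → ℝ) → (Fin 4 → ℝ) → ℝ)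
    (hkn : ∀ a c x y z w, kn a c x y z w =
      a x z * c y w - a y z * c x w + a y w * c x z - a x w * c y z) :
    (∀ x y z w, g (Rm x y z) w + (1/2) * kn g rho x y z w
        - (tau/12) * kn g g x y z w = 0) ∧
    (∀ x y z w, g (Rm x y z) w =
      -(1/2) * kn g rho x y z w + (tau/12) * kn g g x y z w) := by
  have hn0 : ∀ x y : Fin 4 → ℝ, nab x y 0 =
      l1*(x 0*y 3) - l1*(x 2*y 1) + l2*(x 0*y 2) + l2*(x 3*y 1) - l4*(x 2*y 2) - l4*(x 3*y 3) := by
    intro x y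
    have H := hKoszul x y (e 0)
    simp [hg, hb, he, Pi.single_apply] at H
    linear_combination H / 2
  have hn1 : ∀ x y : Fin 4 → ℝ, nab x y 1 =
      l1*(x 1*y 3) + l1*(x 2*y 0) + l2*(x 1*y 2) - l2*(x 3*y 0) - l3*(x 2*y 2) - l3*(x 3*y 3) := by
    intro x y
    have H := hKoszul x y (e 1)
    simp [hg, hb, he, Pi.single_apply] at H
    linear_combination H / 2
  have hn2 : ∀ x y : Fin 4 → ℝ, nab x y 2 =
      l2*(x 0*y 0) + l2*(x 1*y 1) + l3*(x 0*y 3) - l3*(x 2*y 1) - l4*(x 1*y 3) - l4*(x 2*y 0) := by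
    intro x y
    have H := hKoszul x y (e 2)
    simp [hg, hb, he, Pi.single_apply] at H
    linear_combination -H / 2
  have hn3 : ∀ x y : Fin 4 → ℝ, nab x y 3 =
      l1*(x 0*y 0) + l1*(x 1*y 1) - l3*(x 0*y 2) - l3*(x 3*y 1) + l4*(x 1*y 2) - l4*(x 3*y 0) := by
    intro x y
    have H := hKoszul x y (e 3)
    simp [hg, hb, he, Pi.single_apply] at H
    linear_combination -H / 2
  have hrho' : ∀ y z : Fin 4 → ℝ, rho y z =
      2*l1*l1*(y 0*z 0) + 2*l1*l1*(y 1*z 1) - 2*l1*l1*(y 3*z 3) - 2*l1*l2*(y 2*z 3)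
      - 2*l1*l2*(y 3*z 2) - 2*l1*l3*(y 0*z 2) - 2*l1*l3*(y 2*z 0) + 2*l1*l4*(y 1*z 2)
      + 2*l1*l4*(y 2*z 1) + 2*l2*l2*(y 0*z 0) + 2*l2*l2*(y 1*z 1) - 2*l2*l2*(y 2*z 2)
      + 2*l2*l3*(y 0*z 3) + 2*l2*l3*(y 3*z 0) - 2*l2*l4*(y 1*z 3) - 2*l2*l4*(y 3*z 1)
      - 2*l3*l3*(y 1*z 1) + 2*l3*l3*(y 2*z 2) + 2*l3*l3*(y 3*z 3) - 2*l3*l4*(y 0*z 1)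
      - 2*l3*l4*(y 1*z 0) - 2*l4*l4*(y 0*z 0) + 2*l4*l4*(y 2*z 2) + 2*l4*l4*(y 3*z 3) := by
    intro y z
    rw [hrho]
    simp only [Fin.sum_univ_four, hRm, Pi.sub_apply, hg, hn0, hn1, hn2, hn3, hb,
      Pi.add_apply, Pi.smul_apply, smul_eq_mul,
      Matrix.cons_val_zero, Matrix.cons_val_one, Matrix.head_cons,
      Matrix.cons_val_two, Matrix.tail_cons, Matrix.cons_val_three]
    simp [he, Pi.single_apply]
    ring
  have htau' : tau = 6*l1*l1 + 6*l2*l2 - 6*l3*l3 - 6*l4*l4 := by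
    rw [htau]
    simp only [Fin.sum_univ_four, hRm, Pi.sub_apply, hg, hn0, hn1, hn2, hn3, hb,
      Pi.add_apply, Pi.smul_apply, smul_eq_mul,
      Matrix.cons_val_zero, Matrix.cons_val_one, Matrix.head_cons,
      Matrix.cons_val_two, Matrix.tail_cons, Matrix.cons_val_three]
    simp [he, Pi.single_apply]
    ring
  have key : ∀ x y z w, g (Rm x y z) w + (1/2) * kn g rho x y z w
      - (tau/12) * kn g g x y z w = 0 := by
    intro x y z w
    simp only [hkn, hrho', htau', hRm, Pi.sub_apply, hg, hn0, hn1, hn2, hn3, hb,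
      Pi.add_apply, Pi.smul_apply, smul_eq_mul,
      Matrix.cons_val_zero, Matrix.cons_val_one, Matrix.head_cons,
      Matrix.cons_val_two, Matrix.tail_cons, Matrix.cons_val_three]
    ring
  exact ⟨key, fun x y z w => by have := key x y z w; linarith⟩
end
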